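/- arXiv:2012.07282 — 12 statements merged into one kernel-verified Lean document; each statement's English description precedes it below -/
import Mathlib

section
/- Let α > 0, θ ∈ ℝ, and β < 1. If the Archimedean spiral lattice Γ_{α,θ} is asymptotically β-relatively dense, then 1 + 2αβ ≥ 2α. -/
/-- The Archimedean spiral lattice `Γ_{α,θ} = { n^α e^{2πnθi} : n ∈ ℤ, n ≥ 0 }`. -/
noncomputable def spiralLattice (α θ : ℝ) : Set ℂ :=
  {z : ℂ | ∃ n : ℕ, z = (((n : ℝ) ^ α : ℝ) : ℂ) *
    Complex.exp ((2 * Real.pi * n * θ : ℝ) * Complex.I)}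

/-- `Γ` is asymptotically `β`-relatively dense. -/
def AsympRelativelyDense (β : ℝ) (Γ : Set ℂ) : Prop :=
  ∃ r > 0, ∀ r₁ > r, ∃ M > 0, ∀ z : ℂ, M ≤ ‖z‖ →
    ∃ ζ ∈ Γ, 1 ≤ ‖ζ‖ ∧ ‖z - ζ‖ < r₁ * ‖z‖ ^ β

/-!
Area counting. If every `z` with `‖z‖ ≥ M` lies within `r₁ ‖z‖ ^ β` of the lattice, then for
large `R` the annulus `R ≤ ‖z‖ ≤ 2R`, of area `3πR²`, is covered by discs of radius
`ρ = 2 r₁ R ^ β ≤ R` centred at lattice points of modulus at most `3R`, i.e. at `n ^ α e^{2πinθ}`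
with `n ≤ (3R) ^ (1/α)`. Hence `R² ≲ R ^ (1/α) ρ² ≍ R ^ (1/α + 2β)`, which forces
`2 ≤ 1/α + 2β`.
-/

open Real Filter Metric Finset MeasureTheory

theorem eventually_mul_rpow_lt_rpow {a b : ℝ} (hba : b < a) (C : ℝ) :
    ∀ᶠ x : ℝ in atTop, C * x ^ b < x ^ a := by
  filter_upwards [(tendsto_rpow_atTop (sub_pos.2 hba)).eventually_gt_atTop C,
    eventually_gt_atTop 0] with x hx hx₀
  calc C * x ^ b < x ^ (a - b) * x ^ b := by gcongr
    _ = x ^ a := by rw [← rpow_add hx₀, sub_add_cancel]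

theorem rpow_le_two_mul_rpow {x R β : ℝ} (hβ : β ≤ 1) (hR : 0 < R) (hRx : R ≤ x)
    (hx : x ≤ 2 * R) : x ^ β ≤ 2 * R ^ β := by
  rcases le_or_gt 0 β with hβ₀ | hβ₀
  · calc x ^ β ≤ (2 * R) ^ β := by gcongr; linarith
      _ = 2 ^ β * R ^ β := mul_rpow zero_le_two hR.le
      _ ≤ 2 ^ (1 : ℝ) * R ^ β := by gcongr; norm_num
      _ = 2 * R ^ β := by rw [rpow_one]
  · calc x ^ β ≤ R ^ β := rpow_le_rpow_of_nonpos hR hRx hβ₀.le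
      _ ≤ 2 * R ^ β := by linarith [rpow_nonneg hR.le β]

noncomputable def spiralPoint (α θ : ℝ) (n : ℕ) : ℂ :=
  (((n : ℝ) ^ α : ℝ) : ℂ) * Complex.exp ((2 * π * n * θ : ℝ) * Complex.I)

theorem spiralLattice_eq_range (α θ : ℝ) : spiralLattice α θ = Set.range (spiralPoint α θ) := by
  ext z
  simp [spiralLattice, spiralPoint, eq_comm]

theorem norm_spiralPoint (α θ : ℝ) (n : ℕ) : ‖spiralPoint α θ n‖ = (n : ℝ) ^ α := by
  rw [spiralPoint, norm_mul, Complex.norm_exp_ofReal_mul_I, mul_one,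
    Complex.norm_of_nonneg (rpow_nonneg n.cast_nonneg α)]

theorem mem_range_floor_of_norm_spiralPoint_le {α θ X : ℝ} {n : ℕ} (hα : 0 < α)
    (hn : ‖spiralPoint α θ n‖ ≤ X) : n ∈ range (⌊X ^ α⁻¹⌋₊ + 1) := by
  rw [norm_spiralPoint] at hn
  rw [mem_range, Nat.lt_succ_iff]
  apply Nat.le_floor
  calc (n : ℝ) = ((n : ℝ) ^ α) ^ α⁻¹ := (rpow_rpow_inv n.cast_nonneg hα.ne').symm
    _ ≤ X ^ α⁻¹ := by gcongr

theorem annulus_subset_biUnion_closedBall_spiralPoint {α θ β r₁ M R : ℝ} (hα : 0 < α)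
    (hβ : β ≤ 1) (hr₁ : 0 ≤ r₁) (hR : 0 < R) (hMR : M ≤ R) (hρR : 2 * r₁ * R ^ β ≤ R)
    (hM : ∀ z : ℂ, M ≤ ‖z‖ → ∃ ζ ∈ spiralLattice α θ, ‖z - ζ‖ < r₁ * ‖z‖ ^ β) :
    closedBall (0 : ℂ) (2 * R) \ ball 0 R ⊆
      ⋃ n ∈ range (⌊(3 * R) ^ α⁻¹⌋₊ + 1), closedBall (spiralPoint α θ n) (2 * r₁ * R ^ β) := by
  rintro z ⟨hz₂, hz₁⟩
  rw [mem_closedBall_zero_iff] at hz₂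
  rw [mem_ball_zero_iff, not_lt] at hz₁
  obtain ⟨_, ⟨n, rfl⟩, hzn⟩ := spiralLattice_eq_range α θ ▸ hM z (hMR.trans hz₁)
  have hdist : ‖z - spiralPoint α θ n‖ ≤ 2 * r₁ * R ^ β :=
    calc _ ≤ r₁ * ‖z‖ ^ β := hzn.le
      _ ≤ r₁ * (2 * R ^ β) := by gcongr; exact rpow_le_two_mul_rpow hβ hR hz₁ hz₂
      _ = _ := by ring
  have hnorm : ‖spiralPoint α θ n‖ ≤ 3 * R :=
    calc _ ≤ ‖z‖ + ‖z - spiralPoint α θ n‖ := norm_le_insert _ _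
      _ ≤ 3 * R := by linarith
  exact Set.mem_biUnion (mem_range_floor_of_norm_spiralPoint_le hα hnorm)
    (mem_closedBall.2 (by rwa [dist_eq_norm]))

theorem three_mul_sq_le_card_mul_sq_of_annulus_subset {ι : Type*} {t : Finset ι} {c : ι → ℂ}
    {R ρ : ℝ} (hR : 0 ≤ R) (hρ : 0 ≤ ρ)
    (hcover : closedBall (0 : ℂ) (2 * R) \ ball 0 R ⊆ ⋃ i ∈ t, closedBall (c i) ρ) :
    3 * R ^ 2 ≤ #t * ρ ^ 2 := by
  have hvol : volume (closedBall (0 : ℂ) (2 * R)) ≤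
      volume (ball (0 : ℂ) R) + ∑ i ∈ t, volume (closedBall (c i) ρ) :=
    calc _ ≤ volume (ball (0 : ℂ) R ∪ ⋃ i ∈ t, closedBall (c i) ρ) :=
          measure_mono (Set.sdiff_subset_iff.1 hcover)
      _ ≤ _ := (measure_union_le _ _).trans
          (by gcongr; exact measure_biUnion_finset_le _ _)
  simp only [Complex.volume_closedBall, Complex.volume_ball, sum_const, nsmul_eq_mul] at hvol
  have := ENNReal.toReal_mono (by finiteness) hvol
  rw [ENNReal.toReal_add (by finiteness) (by finiteness)] at this
  simp only [ENNReal.toReal_mul, ENNReal.toReal_pow, ENNReal.toReal_ofReal hR,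
    ENNReal.toReal_ofReal hρ, ENNReal.toReal_ofReal (by positivity : (0 : ℝ) ≤ 2 * R),
    ENNReal.toReal_natCast, ENNReal.coe_toReal, NNReal.coe_real_pi] at this
  nlinarith [pi_pos]

theorem AsympRelativelyDense.eventually_rpow_two_le {α θ β : ℝ} (hα : 0 < α) (hβ : β < 1)
    (h : AsympRelativelyDense β (spiralLattice α θ)) :
    ∃ C, ∀ᶠ R : ℝ in atTop, R ^ (2 : ℝ) ≤ C * R ^ (α⁻¹ + 2 * β) := by
  obtain ⟨r, hr, hdense⟩ := h
  obtain ⟨M, -, hM⟩ := hdense (r + 1) (by linarith)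
  refine ⟨(3 ^ α⁻¹ + 1) * (2 * (r + 1)) ^ 2, ?_⟩
  filter_upwards [eventually_mul_rpow_lt_rpow hβ (2 * (r + 1)), eventually_ge_atTop M,
    eventually_ge_atTop 1] with R hρR hMR hR
  have hR₀ : 0 < R := by linarith
  have hcover := annulus_subset_biUnion_closedBall_spiralPoint (θ := θ) hα hβ.le (by linarith)
    hR₀ hMR (by simpa using hρR.le)
    fun z hz ↦ (hM z hz).imp fun _ ⟨hζ, _, hd⟩ ↦ ⟨hζ, hd⟩
  have hRα : 1 ≤ R ^ α⁻¹ := one_le_rpow hR (by positivity)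
  calc R ^ (2 : ℝ) ≤ 3 * R ^ 2 := by rw [rpow_two]; nlinarith
    _ ≤ (⌊(3 * R) ^ α⁻¹⌋₊ + 1) * (2 * (r + 1) * R ^ β) ^ 2 := by
      simpa using three_mul_sq_le_card_mul_sq_of_annulus_subset hR₀.le (by positivity) hcover
    _ ≤ ((3 * R) ^ α⁻¹ + 1) * (2 * (r + 1) * R ^ β) ^ 2 := by
      gcongr; exact Nat.floor_le (by positivity)
    _ = (3 ^ α⁻¹ * R ^ α⁻¹ + 1) * (2 * (r + 1)) ^ 2 * R ^ (2 * β) := by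
      rw [mul_rpow (by norm_num) hR₀.le, mul_comm 2 β, rpow_mul hR₀.le, rpow_two]; ring
    _ ≤ (3 ^ α⁻¹ * R ^ α⁻¹ + R ^ α⁻¹) * (2 * (r + 1)) ^ 2 * R ^ (2 * β) := by gcongr
    _ = (3 ^ α⁻¹ + 1) * (2 * (r + 1)) ^ 2 * R ^ (α⁻¹ + 2 * β) := by rw [rpow_add hR₀]; ring

theorem relatively_dense_implies_exponent_ineq (α θ β : ℝ) (hα : 0 < α) (hβ : β < 1)
    (h : AsympRelativelyDense β (spiralLattice α θ)) :
    2 * α ≤ 1 + 2 * α * β := by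
  obtain ⟨C, hC⟩ := h.eventually_rpow_two_le hα hβ
  by_contra! hlt
  have hexp : α⁻¹ + 2 * β < 2 := by
    have := mul_inv_cancel₀ hα.ne'
    nlinarith
  obtain ⟨R, hle, hgt⟩ := (hC.and (eventually_mul_rpow_lt_rpow hexp C)).exists
  exact hle.not_gt hgt
end

section
/- Let α > 0, θ ∈ ℝ, and β < 1 with 1 + 2αβ = 2α. If the Archimedean spiral lattice Γ_{α,θ} is asymptotically β-relatively dense or asymptotically β-uniformly discrete, then θ is irrational. -/
/-- `Γ` is asymptotically `β`-uniformly discrete. -/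
def AsympUniformlyDiscrete (β : ℝ) (Γ : Set ℂ) : Prop :=
  ∃ s > 0, ∀ s₁, 0 < s₁ → s₁ < s → ∃ M > 0, ∀ z : ℂ, M ≤ ‖z‖ →
    {ζ ∈ Γ | 1 ≤ ‖ζ‖ ∧ ‖z - ζ‖ < s₁ * ‖z‖ ^ β}.Subsingleton

open Filter Asymptotics Complex

def rootRays (b : ℕ) : Set ℂ := {ζ | ∃ t : ℝ, 0 ≤ t ∧ ∃ u : ℂ, u ^ b = 1 ∧ ζ = t * u}

lemma norm_pow_sub_pow_le {R : Type*} [SeminormedCommRing R] [NormOneClass R] {x y : R}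
    {M : ℝ} (hx : ‖x‖ ≤ M) (hy : ‖y‖ ≤ M) (n : ℕ) :
    ‖x ^ n - y ^ n‖ ≤ n * M ^ (n - 1) * ‖x - y‖ := by
  have hM : 0 ≤ M := (norm_nonneg x).trans hx
  have hterm : ∀ i ∈ Finset.range n, ‖x ^ i * y ^ (n - 1 - i)‖ ≤ M ^ (n - 1) := by
    intro i hi
    calc ‖x ^ i * y ^ (n - 1 - i)‖ ≤ ‖x‖ ^ i * ‖y‖ ^ (n - 1 - i) :=
          (norm_mul_le _ _).trans (mul_le_mul (norm_pow_le _ _) (norm_pow_le _ _)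
            (norm_nonneg _) (by positivity))
      _ ≤ M ^ i * M ^ (n - 1 - i) := by gcongr
      _ = M ^ (n - 1) := by rw [← pow_add]; congr 1; have := Finset.mem_range.1 hi; omega
  rw [← geom_sum₂_mul]
  refine (norm_mul_le _ _).trans (mul_le_mul_of_nonneg_right ?_ (norm_nonneg _))
  simpa using (norm_sum_le _ _).trans (Finset.sum_le_sum hterm)

lemma div_le_norm_sub_mul_of_pow_eq_neg_one {b : ℕ} (hb : 0 < b) {v : ℂ} (hv : v ^ b = -1)
    {R t : ℝ} (hR : 0 < R) (ht : 0 ≤ t) : R / (b * 2 ^ b) ≤ ‖(R : ℂ) - t * v‖ := by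
  have hv1 : ‖v‖ = 1 := by
    have := congrArg norm hv
    rw [norm_pow, norm_neg, norm_one] at this
    exact (pow_eq_one_iff_of_nonneg (norm_nonneg _) hb.ne').1 this
  have htv : ‖(t : ℂ) * v‖ = t := by simp [hv1, abs_of_nonneg ht]
  have hden : (0 : ℝ) < b * 2 ^ b := by positivity
  rw [div_le_iff₀ hden]
  rcases le_or_gt t (2 * R) with hsmall | hlarge
  · have hRb : R ^ b ≤ ‖(R : ℂ) ^ b - (t * v) ^ b‖ := by
      rw [mul_pow, hv, mul_neg_one, sub_neg_eq_add, ← ofReal_pow, ← ofReal_pow, ← ofReal_add,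
        norm_real, Real.norm_of_nonneg (by positivity)]
      linarith [pow_nonneg ht b]
    have hfactor := norm_pow_sub_pow_le (x := (R : ℂ)) (M := 2 * R)
      (by rw [norm_real, Real.norm_of_nonneg hR.le]; linarith) (htv.trans_le hsmall) b
    have hchain := hRb.trans hfactor
    obtain ⟨m, rfl⟩ : ∃ m, b = m + 1 := ⟨b - 1, by omega⟩
    rw [Nat.add_sub_cancel, mul_pow, pow_succ] at hchain
    have hcancel : R ≤ (m + 1) * 2 ^ m * ‖(R : ℂ) - t * v‖ :=
      le_of_mul_le_mul_left (by push_cast at hchain; linarith) (by positivity : 0 < R ^ m)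
    push_cast
    rw [pow_succ]
    nlinarith [norm_nonneg ((R : ℂ) - t * v), pow_pos (two_pos (α := ℝ)) m]
  · have hfar : t - R ≤ ‖(R : ℂ) - t * v‖ := by
      simpa [hv1, abs_of_nonneg ht, abs_of_pos hR] using
        (norm_sub_norm_le ((t : ℂ) * v) R).trans_eq (norm_sub_rev _ _)
    have h1 : (1 : ℝ) ≤ b * 2 ^ b :=
      one_le_mul_of_one_le_of_one_le (by exact_mod_cast hb) (one_le_pow₀ one_le_two)
    nlinarith

lemma isLittleO_rpow_rpow_atTop {a b : ℝ} (hab : a < b) :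
    (fun x : ℝ => x ^ a) =o[atTop] fun x => x ^ b := by
  have hlim : (fun x : ℝ => x ^ (a - b)) =o[atTop] fun _ => (1 : ℝ) :=
    (isLittleO_one_iff ℝ).2 (by simpa using tendsto_rpow_neg_atTop (sub_pos.2 hab))
  refine (hlim.mul_isBigO (isBigO_refl (fun x : ℝ => x ^ b) atTop)).congr' ?_ (by simp)
  filter_upwards [eventually_gt_atTop 0] with x hx
  rw [← Real.rpow_add hx, sub_add_cancel]

lemma isBigO_rpow_add_sub_rpow (α d : ℝ) :
    (fun x : ℝ => (x + d) ^ α - x ^ α) =O[atTop] fun x => x ^ (α - 1) := by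
  have hderiv : HasDerivAt (fun h : ℝ => (1 + h) ^ α) (1 * α * (1 + 0) ^ (α - 1)) 0 :=
    ((hasDerivAt_id 0).const_add 1).rpow_const (by norm_num)
  have hsmall : (fun x : ℝ => (1 + d / x) ^ α - 1) =O[atTop] fun x => d / x := by
    simpa [Function.comp_def] using
      hderiv.isBigO_sub.comp_tendsto (tendsto_const_nhds.div_atTop tendsto_id)
  refine ((isBigO_refl (fun x : ℝ => x ^ α) atTop).mul hsmall).congr' ?_ ?_
    |>.trans (isBigO_const_mul_self d _ atTop)
  · filter_upwards [eventually_gt_atTop 0, eventually_gt_atTop (-d)] with x hx hxd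
    have hpos : 0 ≤ 1 + d / x := by
      rw [← div_self hx.ne', ← add_div]; exact div_nonneg (by linarith) hx.le
    rw [mul_sub, mul_one, ← Real.mul_rpow hx.le hpos, mul_add, mul_one, mul_div_cancel₀ _ hx.ne']
  · filter_upwards [eventually_gt_atTop 0] with x hx
    rw [Real.rpow_sub_one hx.ne']
    ring

lemma exp_two_pi_mul_rat_pow_den (q : ℚ) (n : ℕ) :
    exp ((2 * Real.pi * n * q : ℝ) * I) ^ q.den = 1 := by
  rw [← exp_nat_mul, exp_eq_one_iff]
  refine ⟨n * q.num, ?_⟩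
  have hq : (q.den : ℂ) * q = q.num := by exact_mod_cast Rat.den_mul_eq_num q
  push_cast
  linear_combination (2 * Real.pi * n * I) * hq

lemma spiralLattice_rat_subset_rootRays (α : ℝ) (q : ℚ) :
    spiralLattice α q ⊆ rootRays q.den := by
  rintro _ ⟨n, rfl⟩
  exact ⟨_, by positivity, _, exp_two_pi_mul_rat_pow_den q n, rfl⟩

lemma rpow_mul_den_mem_spiralLattice (α : ℝ) (q : ℚ) (k : ℕ) :
    (((k * q.den : ℝ) ^ α : ℝ) : ℂ) ∈ spiralLattice α q := by
  refine ⟨k * q.den, ?_⟩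
  have hexp : exp ((2 * Real.pi * (k * q.den : ℕ) * q : ℝ) * I) = 1 := by
    rw [← exp_two_pi_mul_rat_pow_den q k, ← exp_nat_mul]
    push_cast
    ring_nf
  rw [hexp]
  push_cast
  ring

theorem not_asympRelativelyDense_of_subset_rootRays {β : ℝ} (hβ : β < 1) {b : ℕ} (hb : 0 < b)
    {Γ : Set ℂ} (hΓ : Γ ⊆ rootRays b) : ¬AsympRelativelyDense β Γ := by
  rintro ⟨r, hr, hdense⟩
  obtain ⟨M, -, hM⟩ := hdense (r + 1) (by linarith)
  obtain ⟨R, hRM, hR, hRβ⟩ : ∃ R : ℝ, M ≤ R ∧ 0 < R ∧ (r + 1) * R ^ β < R / (b * 2 ^ b) := by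
    refine ((eventually_ge_atTop M).and ((eventually_gt_atTop 0).and
      ((isLittleO_rpow_rpow_atTop hβ).def (c := 1 / (2 * (r + 1) * (b * 2 ^ b)))
        (by positivity)))).exists.imp fun R ⟨hRM, hR, hRβ⟩ => ⟨hRM, hR, ?_⟩
    rw [Real.rpow_one, Real.norm_of_nonneg hR.le,
      Real.norm_of_nonneg (Real.rpow_nonneg hR.le _)] at hRβ
    have : (0 : ℝ) < R / (b * 2 ^ b) := by positivity
    calc (r + 1) * R ^ β ≤ (r + 1) * (1 / (2 * (r + 1) * (b * 2 ^ b)) * R) := by gcongr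
      _ = R / (b * 2 ^ b) / 2 := by field_simp
      _ < R / (b * 2 ^ b) := by linarith
  set ω := exp ((Real.pi / b : ℝ) * I)
  have hω : ω ^ b = -1 := by
    rw [← exp_nat_mul, ← exp_pi_mul_I]
    congr 1
    push_cast
    field_simp [show (b : ℂ) ≠ 0 by exact_mod_cast hb.ne']
  have hω1 : ‖ω‖ = 1 := norm_exp_ofReal_mul_I _
  have hz : ‖(R : ℂ) * ω‖ = R := by
    rw [norm_mul, hω1, mul_one, norm_real, Real.norm_of_nonneg hR.le]
  obtain ⟨ζ, hζ, -, hclose⟩ := hM (R * ω) (by rw [hz]; exact hRM)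
  obtain ⟨t, ht, u, hu, rfl⟩ := hΓ hζ
  have hω0 : ω ≠ 0 := exp_ne_zero _
  have hfactor : (R : ℂ) * ω - t * u = ω * (R - t * (u / ω)) := by field_simp
  have hfar := div_le_norm_sub_mul_of_pow_eq_neg_one hb
    (by rw [div_pow, hu, hω, div_neg, div_one] : (u / ω) ^ b = -1) hR ht
  rw [hz, hfactor, norm_mul, hω1, one_mul] at hclose
  linarith

theorem not_asympUniformlyDiscrete_of_rpow_mem {α β d : ℝ} (hα : 0 < α) (hαβ : α - 1 < α * β)
    (hd : 0 < d) {Γ : Set ℂ} (hΓ : ∀ k : ℕ, (((k * d) ^ α : ℝ) : ℂ) ∈ Γ) :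
    ¬AsympUniformlyDiscrete β Γ := by
  rintro ⟨s, hs, hdisc⟩
  obtain ⟨M, -, hM⟩ := hdisc (s / 2) (by positivity) (by linarith)
  have hgap := (isBigO_rpow_add_sub_rpow α d).trans_isLittleO (isLittleO_rpow_rpow_atTop hαβ)
  obtain ⟨k, hxM, hx, hxgap⟩ : ∃ k : ℕ, max M 1 ≤ (k * d) ^ α ∧ 0 < (k * d : ℝ) ∧
      ‖(k * d + d) ^ α - (k * d) ^ α‖ ≤ s / 4 * ‖(k * d) ^ (α * β)‖ :=
    ((tendsto_natCast_atTop_atTop.atTop_mul_const hd).eventually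
      (((tendsto_rpow_atTop hα).eventually_ge_atTop (max M 1)).and
        ((eventually_gt_atTop 0).and (hgap.def (by positivity))))).exists
  set x : ℝ := k * d
  have hmono : x ^ α < (x + d) ^ α := Real.rpow_lt_rpow hx.le (by linarith) hα
  have hxα : ‖((x ^ α : ℝ) : ℂ)‖ = x ^ α := by
    rw [norm_real, Real.norm_of_nonneg (by positivity)]
  have hxβ : ‖((x ^ α : ℝ) : ℂ)‖ ^ β = x ^ (α * β) := by rw [hxα, ← Real.rpow_mul hx.le]
  have hpos : 0 < x ^ (α * β) := by positivity
  have hnext : (((x + d) ^ α : ℝ) : ℂ) ∈ Γ := by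
    simpa [x, add_mul] using hΓ (k + 1)
  have hx_mem : ((x ^ α : ℝ) : ℂ) ∈
      {ζ ∈ Γ | 1 ≤ ‖ζ‖ ∧ ‖((x ^ α : ℝ) : ℂ) - ζ‖ < s / 2 * ‖((x ^ α : ℝ) : ℂ)‖ ^ β} := by
    refine ⟨hΓ k, by rw [hxα]; exact le_of_max_le_right hxM, ?_⟩
    rw [sub_self, norm_zero, hxβ]
    positivity
  have hnext_mem : (((x + d) ^ α : ℝ) : ℂ) ∈
      {ζ ∈ Γ | 1 ≤ ‖ζ‖ ∧ ‖((x ^ α : ℝ) : ℂ) - ζ‖ < s / 2 * ‖((x ^ α : ℝ) : ℂ)‖ ^ β} := by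
    refine ⟨hnext, ?_, ?_⟩
    · rw [norm_real, Real.norm_of_nonneg (by positivity)]
      linarith [le_of_max_le_right hxM]
    · rw [hxβ, ← ofReal_sub, norm_real, norm_sub_rev]
      rw [Real.norm_of_nonneg hpos.le] at hxgap
      linarith [mul_pos hs hpos]
  have hsame := hM _ (by rw [hxα]; exact le_of_max_le_left hxM) hx_mem hnext_mem
  exact hmono.ne (by exact_mod_cast hsame)

theorem delone_implies_irrational (α θ β : ℝ) (hα : 0 < α) (hβ : β < 1)
    (hcrit : 1 + 2 * α * β = 2 * α)
    (h : AsympRelativelyDense β (spiralLattice α θ) ∨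
      AsympUniformlyDiscrete β (spiralLattice α θ)) :
    Irrational θ := by
  rintro ⟨q, rfl⟩
  rcases h with hdense | hdisc
  · exact not_asympRelativelyDense_of_subset_rootRays hβ q.pos
      (spiralLattice_rat_subset_rootRays α q) hdense
  · exact not_asympUniformlyDiscrete_of_rpow_mem hα (by linarith) (by exact_mod_cast q.pos)
      (rpow_mul_den_mem_spiralLattice α q) hdisc
end

section
/- Let θ be an irrational real number, and for t ≥ 1 let Λ(t) = { ((mθ − n)·√t, m/√t) : m, n ∈ ℤ } ⊆ ℝ². The following conditions are mutually equivalent: (i) the family {Λ(t)}_{t≥1} is relatively dense; (ii) the family {Λ(t)}_{t≥1} is uniformly discrete; (iii) θ is badly approximable. -/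
/-!
The vector of `(m, n)` in `Λ(t)` has coordinates whose product `m (mθ - n)` does not depend on
`t`, and two such vectors span a parallelogram of integer area `mn' - m'n`. If `θ` is badly
approximable, the first fact bounds the nonzero vectors of all `Λ(t)` away from `0`, which gives
uniform discreteness. Moreover Dirichlet's theorem yields a primitive vector `u` of `Λ(t)` of
length at most `2`; completing it to a basis of determinant `1` and reducing the second vector
modulo `u` gives a basis of bounded length, hence relative denseness. If `θ` is not badly
approximable, some `Λ(t)` contains arbitrarily short nonzero vectors `u`. These contradict
uniform discreteness, and relative denseness too: `Λ(t)` lies on the lines `det(u, ·) ∈ ℤ`, which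
are `1 / ‖u‖` apart.
-/

/-- The lattice `Λ(t) = { ((mθ − n)√t, m/√t) : m, n ∈ ℤ }`. -/
noncomputable def latticeFamily (θ t : ℝ) : Set (ℝ × ℝ) :=
  {v : ℝ × ℝ | ∃ m n : ℤ,
    v = (((m : ℝ) * θ - (n : ℝ)) * Real.sqrt t, (m : ℝ) / Real.sqrt t)}

/-- Euclidean distance on `ℝ × ℝ`. -/
noncomputable def eDist (a b : ℝ × ℝ) : ℝ :=
  Real.sqrt ((a.1 - b.1) ^ 2 + (a.2 - b.2) ^ 2)

/-- The family `{Λ(t)}_{t ≥ 1}` is relatively dense. -/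
def FamilyRelativelyDense (θ : ℝ) : Prop :=
  ∃ r > 0, ∀ t ≥ (1 : ℝ), ∀ ζ : ℝ × ℝ, ∃ l ∈ latticeFamily θ t, eDist ζ l < r

/-- The family `{Λ(t)}_{t ≥ 1}` is uniformly discrete. -/
def FamilyUniformlyDiscrete (θ : ℝ) : Prop :=
  ∃ s > 0, ∀ t ≥ (1 : ℝ), ∀ ζ : ℝ × ℝ,
    {l ∈ latticeFamily θ t | eDist ζ l < s}.Subsingleton

/-- `θ` is badly approximable. -/
def BadlyApproximable (θ : ℝ) : Prop :=
  Irrational θ ∧ ∃ c > 0, ∀ p q : ℤ, 1 ≤ q → c ≤ (q : ℝ) * |(q : ℝ) * θ - (p : ℝ)|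

open WithLp

local notation "ℝ²" => WithLp 2 (ℝ × ℝ)

lemma eDist_eq_dist (a b : ℝ × ℝ) : eDist a b = dist (toLp 2 a) (toLp 2 b) := by
  simp [eDist, prod_dist_eq_of_L2, Real.dist_eq, sq_abs]

section Plane

@[ext]
lemma plane_ext {u v : ℝ²} (h₁ : u.fst = v.fst) (h₂ : u.snd = v.snd) : u = v :=
  (WithLp.ext_iff 2).2 (Prod.ext h₁ h₂)

def cross (u v : ℝ²) : ℝ := u.fst * v.snd - u.snd * v.fst

lemma norm_sq_eq_fst_sq_add_snd_sq (u : ℝ²) : ‖u‖ ^ 2 = u.fst ^ 2 + u.snd ^ 2 := by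
  simp [prod_norm_sq_eq_of_L2]

lemma inner_sq_add_cross_sq (u v : ℝ²) :
    inner ℝ u v ^ 2 + cross u v ^ 2 = ‖u‖ ^ 2 * ‖v‖ ^ 2 := by
  simp only [prod_inner_apply, ofLp_fst, ofLp_snd, RCLike.inner_apply, conj_trivial, cross,
    norm_sq_eq_fst_sq_add_snd_sq]
  ring

lemma abs_cross_le (u v : ℝ²) : |cross u v| ≤ ‖u‖ * ‖v‖ :=
  abs_le_of_sq_le_sq (by nlinarith [inner_sq_add_cross_sq u v, sq_nonneg (inner ℝ u v)])
    (by positivity)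

lemma cross_sub_smul_self (u w : ℝ²) (c : ℝ) : cross u (w - c • u) = cross u w := by
  simp only [cross, sub_fst, sub_snd, smul_fst, smul_snd, smul_eq_mul]
  ring

lemma exists_int_norm_sub_smul_sq_le {u : ℝ²} (hu : u ≠ 0) (w : ℝ²) :
    ∃ k : ℤ, ‖w - (k : ℝ) • u‖ ^ 2 ≤ ‖u‖ ^ 2 / 4 + cross u w ^ 2 / ‖u‖ ^ 2 := by
  set μ := inner ℝ u w / ‖u‖ ^ 2
  refine ⟨round μ, ?_⟩
  have hu2 : 0 < ‖u‖ ^ 2 := by positivity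
  have hinner : inner ℝ u (w - (round μ : ℝ) • u) = (μ - round μ) * ‖u‖ ^ 2 := by
    rw [inner_sub_right, inner_smul_right, real_inner_self_eq_norm_sq, sub_mul,
      div_mul_cancel₀ _ hu2.ne']
  have hμ : (μ - round μ) ^ 2 ≤ (1 / 2) ^ 2 := sq_le_sq' (abs_le.1 (abs_sub_round μ)).1
    (abs_le.1 (abs_sub_round μ)).2
  have hlag := inner_sq_add_cross_sq u (w - (round μ : ℝ) • u)
  rw [hinner, cross_sub_smul_self] at hlag
  rw [← sub_le_iff_le_add', le_div_iff₀ hu2]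
  nlinarith [mul_le_mul_of_nonneg_right hμ (sq_nonneg (‖u‖ ^ 2))]

lemma eq_cross_smul_add_cross_smul {u w : ℝ²} (h : cross u w ≠ 0) (ζ : ℝ²) :
    ζ = (cross ζ w / cross u w) • u + (cross u ζ / cross u w) • w := by
  ext <;> simp only [add_fst, add_snd, smul_fst, smul_snd, smul_eq_mul] <;> field_simp <;>
    simp only [cross] <;> ring

lemma exists_int_norm_sub_add_smul_le {u w : ℝ²} (h : cross u w ≠ 0) (ζ : ℝ²) :
    ∃ a b : ℤ, ‖ζ - ((a : ℝ) • u + (b : ℝ) • w)‖ ≤ (‖u‖ + ‖w‖) / 2 := by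
  set x := cross ζ w / cross u w
  set y := cross u ζ / cross u w
  refine ⟨round x, round y, ?_⟩
  have hζ : ζ - ((round x : ℝ) • u + (round y : ℝ) • w) =
      (x - round x) • u + (y - round y) • w := by
    conv_lhs => rw [eq_cross_smul_add_cross_smul h ζ]
    simp only [sub_smul]; abel
  rw [hζ]
  calc ‖(x - round x) • u + (y - round y) • w‖
      ≤ |x - round x| * ‖u‖ + |y - round y| * ‖w‖ := by
        refine (norm_add_le _ _).trans_eq ?_
        rw [norm_smul, norm_smul, Real.norm_eq_abs, Real.norm_eq_abs]
    _ ≤ 1 / 2 * ‖u‖ + 1 / 2 * ‖w‖ := by gcongr <;> exact abs_sub_round _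
    _ = (‖u‖ + ‖w‖) / 2 := by ring

lemma exists_one_le_two_mul_norm_mul_dist {u : ℝ²} (hu : u ≠ 0) :
    ∃ ζ : ℝ², ∀ w : ℝ², (∃ k : ℤ, cross u w = k) → 1 ≤ 2 * (‖u‖ * dist ζ w) := by
  have hu2 : 0 < ‖u‖ ^ 2 := by positivity
  -- `ζ` lies halfway between two consecutive lines `cross u · ∈ ℤ`
  refine ⟨(2 * ‖u‖ ^ 2)⁻¹ • toLp 2 (-u.snd, u.fst), fun w ⟨k, hk⟩ => ?_⟩
  set ζ := (2 * ‖u‖ ^ 2)⁻¹ • toLp 2 (-u.snd, u.fst)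
  have hζ : cross u ζ = 1 / 2 := by
    simp only [ζ, cross, smul_fst, smul_snd, toLp_fst, toLp_snd, smul_eq_mul]
    rw [norm_sq_eq_fst_sq_add_snd_sq] at hu2 ⊢
    field_simp
    ring
  have hhalf : (1 : ℝ) / 2 ≤ |1 / 2 - (k : ℝ)| := by
    rcases le_or_gt k 0 with hk0 | hk0
    · have : (k : ℝ) ≤ 0 := by exact_mod_cast hk0
      rw [abs_of_pos] <;> linarith
    · have : (1 : ℝ) ≤ k := by exact_mod_cast hk0
      rw [abs_of_neg] <;> linarith
  have hcross : cross u (ζ - w) = 1 / 2 - k := by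
    rw [← hζ, ← hk]; simp only [cross, sub_fst, sub_snd]; ring
  calc (1 : ℝ) ≤ 2 * |cross u (ζ - w)| := by rw [hcross]; linarith
    _ ≤ 2 * (‖u‖ * dist ζ w) := by rw [dist_eq_norm]; gcongr; exact abs_cross_le u _

lemma exists_int_dist_add_smul_le {u w : ℝ²} (h : cross u w = 1) (ζ : ℝ²) :
    ∃ a b : ℤ,
      dist ζ ((a : ℝ) • u + (b : ℝ) • w) ≤ (‖u‖ + √(‖u‖ ^ 2 / 4 + 1 / ‖u‖ ^ 2)) / 2 := by
  have hu : u ≠ 0 := by rintro rfl; simp [cross] at h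
  obtain ⟨k, hk⟩ := exists_int_norm_sub_smul_sq_le hu w
  rw [h, one_pow] at hk
  have h' : cross u (w - (k : ℝ) • u) = 1 := by rw [cross_sub_smul_self, h]
  obtain ⟨a, b, hab⟩ := exists_int_norm_sub_add_smul_le (h'.symm ▸ one_ne_zero) ζ
  have hw : ‖w - (k : ℝ) • u‖ ≤ √(‖u‖ ^ 2 / 4 + 1 / ‖u‖ ^ 2) :=
    (Real.le_sqrt (norm_nonneg _) (by positivity)).2 hk
  refine ⟨a - b * k, b, ?_⟩
  have hcomb : ((a - b * k : ℤ) : ℝ) • u + (b : ℝ) • w =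
      (a : ℝ) • u + (b : ℝ) • (w - (k : ℝ) • u) := by
    push_cast
    module
  rw [dist_eq_norm, hcomb]
  exact hab.trans (by gcongr)

end Plane

lemma BadlyApproximable.exists_le_abs_mul {θ : ℝ} (h : BadlyApproximable θ) :
    ∃ c > 0, ∀ m n : ℤ, m ≠ 0 → c ≤ |(m : ℝ)| * |m * θ - n| := by
  obtain ⟨-, c, hc, hb⟩ := h
  refine ⟨c, hc, fun m n hm => ?_⟩
  rcases hm.lt_or_gt with hm | hm
  · have := hb (-n) (-m) (by omega)
    rw [abs_of_neg (by exact_mod_cast hm : (m : ℝ) < 0), ← abs_neg ((m : ℝ) * θ - n)]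
    push_cast at this
    convert this using 2
    ring_nf
  · rw [abs_of_pos (by exact_mod_cast hm : (0 : ℝ) < m)]
    exact hb n m hm

lemma exists_mul_abs_mul_sub_lt_of_not_badlyApproximable {θ : ℝ} (h : ¬BadlyApproximable θ)
    {c : ℝ} (hc : 0 < c) : ∃ p q : ℤ, 1 ≤ q ∧ (q : ℝ) * |q * θ - p| < c := by
  by_cases hθ : Irrational θ
  · by_contra! H
    exact h ⟨hθ, c, hc, H⟩
  · obtain ⟨r, rfl⟩ := not_not.1 hθ
    refine ⟨r.num, r.den, by exact_mod_cast r.pos, ?_⟩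
    have : ((r.den : ℤ) : ℝ) * r - r.num = 0 := by
      rw [sub_eq_zero]; exact_mod_cast r.den_mul_eq_num
    rwa [this, abs_zero, mul_zero]

section Lattice

variable (θ t : ℝ)

noncomputable def latticeMap : ℤ × ℤ →+ ℝ² where
  toFun p := toLp 2 (((p.1 : ℝ) * θ - p.2) * √t, p.1 / √t)
  map_zero' := by ext <;> simp
  map_add' p q := by ext <;> simp <;> ring

variable {θ t}

@[simp]
lemma latticeMap_fst (p : ℤ × ℤ) : (latticeMap θ t p).fst = ((p.1 : ℝ) * θ - p.2) * √t := rfl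

@[simp]
lemma latticeMap_snd (p : ℤ × ℤ) : (latticeMap θ t p).snd = p.1 / √t := rfl

lemma mem_latticeFamily_iff {v : ℝ × ℝ} :
    v ∈ latticeFamily θ t ↔ toLp 2 v ∈ Set.range (latticeMap θ t) := by
  simp only [latticeFamily, Set.mem_ofPred_eq, Set.mem_range, Prod.exists, latticeMap,
    AddMonoidHom.coe_mk, ZeroHom.coe_mk, WithLp.ext_iff 2]
  exact exists₂_congr fun _ _ => eq_comm

lemma ofLp_latticeMap_mem_latticeFamily (p : ℤ × ℤ) :
    ofLp (latticeMap θ t p) ∈ latticeFamily θ t :=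
  mem_latticeFamily_iff.2 ⟨p, rfl⟩

lemma norm_latticeMap_sq (ht : 0 < t) (p : ℤ × ℤ) :
    ‖latticeMap θ t p‖ ^ 2 = ((p.1 : ℝ) * θ - p.2) ^ 2 * t + (p.1 : ℝ) ^ 2 / t := by
  rw [norm_sq_eq_fst_sq_add_snd_sq, latticeMap_fst, latticeMap_snd, mul_pow, div_pow,
    Real.sq_sqrt ht.le]

lemma cross_latticeMap (ht : 0 < t) (p q : ℤ × ℤ) :
    cross (latticeMap θ t p) (latticeMap θ t q) = ((p.1 * q.2 - q.1 * p.2 : ℤ) : ℝ) := by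
  have : √t ≠ 0 := (Real.sqrt_pos.2 ht).ne'
  simp only [cross, latticeMap_fst, latticeMap_snd]
  push_cast
  field_simp
  ring

lemma latticeMap_injective (ht : 0 < t) : Function.Injective (latticeMap θ t) := by
  refine (injective_iff_map_eq_zero _).2 fun p hp => ?_
  have hs : √t ≠ 0 := (Real.sqrt_pos.2 ht).ne'
  have h₁ : (latticeMap θ t p).snd = 0 := by rw [hp]; rfl
  have h₂ : (latticeMap θ t p).fst = 0 := by rw [hp]; rfl
  simp only [latticeMap_snd, div_eq_zero_iff, hs, or_false, Int.cast_eq_zero] at h₁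
  simp [h₁, hs] at h₂
  exact Prod.ext h₁ h₂

lemma latticeMap_fst_mul_snd (ht : 0 < t) (p : ℤ × ℤ) :
    (latticeMap θ t p).fst * (latticeMap θ t p).snd = p.1 * (p.1 * θ - p.2) := by
  have : √t ≠ 0 := (Real.sqrt_pos.2 ht).ne'
  simp only [latticeMap_fst, latticeMap_snd]
  field_simp

lemma BadlyApproximable.exists_pos_le_norm_latticeMap (h : BadlyApproximable θ) :
    ∃ σ > 0, ∀ t ≥ (1 : ℝ), ∀ p : ℤ × ℤ, p ≠ 0 → σ ≤ ‖latticeMap θ t p‖ := by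
  obtain ⟨c, hc, hb⟩ := h.exists_le_abs_mul
  refine ⟨√(min 1 (2 * c)), by positivity, fun t ht p hp => ?_⟩
  have ht0 : 0 < t := by linarith
  suffices min 1 (2 * c) ≤ ‖latticeMap θ t p‖ ^ 2 from
    (Real.sqrt_le_sqrt this).trans_eq (Real.sqrt_sq (norm_nonneg _))
  by_cases hm : p.1 = 0
  · have hn : p.2 ≠ 0 := fun hn => hp (Prod.ext hm hn)
    have hn1 : (1 : ℝ) ≤ (p.2 : ℝ) ^ 2 := by
      rw [← sq_abs, ← Int.cast_abs]
      exact one_le_pow₀ (by exact_mod_cast Int.one_le_abs hn)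
    have hnorm : ‖latticeMap θ t p‖ ^ 2 = (p.2 : ℝ) ^ 2 * t := by
      rw [norm_latticeMap_sq ht0, hm]
      simp
    nlinarith [min_le_left 1 (2 * c)]
  · have hxy := latticeMap_fst_mul_snd (θ := θ) ht0 p
    have hamgm := two_mul_le_add_sq |(latticeMap θ t p).fst| |(latticeMap θ t p).snd|
    rw [mul_assoc, ← abs_mul, hxy, abs_mul, sq_abs, sq_abs, ← norm_sq_eq_fst_sq_add_snd_sq]
      at hamgm
    linarith [min_le_right 1 (2 * c), hb p.1 p.2 hm]

lemma exists_norm_latticeMap_lt_of_not_badlyApproximable (h : ¬BadlyApproximable θ) {ε : ℝ}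
    (hε : 0 < ε) : ∃ t ≥ (1 : ℝ), ∃ p : ℤ × ℤ, p ≠ 0 ∧ ‖latticeMap θ t p‖ < ε := by
  wlog hε1 : ε ≤ 1 generalizing ε
  · obtain ⟨t, ht, p, hp, hlt⟩ := this one_pos le_rfl
    exact ⟨t, ht, p, hp, hlt.trans (by linarith)⟩
  obtain ⟨n, m, hm, hmn⟩ :=
    exists_mul_abs_mul_sub_lt_of_not_badlyApproximable h (c := ε ^ 2 / 2) (by positivity)
  have hm' : (1 : ℝ) ≤ m := by exact_mod_cast hm
  have hsq : (m : ℝ) ^ 2 * (m * θ - n) ^ 2 < (ε ^ 2 / 2) ^ 2 := by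
    rw [← sq_abs ((m : ℝ) * θ - n), ← mul_pow]
    exact pow_lt_pow_left₀ hmn (by positivity) two_ne_zero
  -- for `t = 2m²/ε²` the coordinates of the vector of `(m, n)` have squares `< ε²/2` and `= ε²/2`
  refine ⟨2 * m ^ 2 / ε ^ 2, ?_, (m, n), fun h0 => by simp at h0; omega, ?_⟩
  · rw [ge_iff_le, le_div_iff₀ (by positivity)]
    nlinarith
  · rw [← pow_lt_pow_iff_left₀ (norm_nonneg _) hε.le two_ne_zero,
      norm_latticeMap_sq (by positivity)]
    field_simp
    nlinarith

lemma exists_isCoprime_norm_latticeMap_le (ht : 1 ≤ t) :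
    ∃ p : ℤ × ℤ, IsCoprime p.1 p.2 ∧ ‖latticeMap θ t p‖ ≤ 2 := by
  have hs1 : 1 ≤ √t := Real.one_le_sqrt.2 ht
  set N := ⌊√t⌋₊
  have hN : √t < N + 1 := Nat.lt_floor_add_one _
  have hN' : (N : ℝ) ≤ √t := Nat.floor_le (by positivity)
  obtain ⟨r, hr, hden⟩ := Real.exists_rat_abs_sub_le_and_den_le θ (Nat.floor_pos.2 hs1)
  refine ⟨(r.den, r.num), (Rat.isCoprime_num_den r).symm, ?_⟩
  have hd : (0 : ℝ) < r.den := by exact_mod_cast r.pos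
  have happrox : |(r.den : ℝ) * θ - r.num| * √t ≤ 1 := by
    have : (r.den : ℝ) * θ - r.num = r.den * (θ - r) := by
      rw [mul_sub, ← Rat.cast_natCast, ← Rat.cast_mul, r.den_mul_eq_num, Rat.cast_intCast]
    rw [this, abs_mul, abs_of_pos hd]
    calc (r.den : ℝ) * |θ - r| * √t ≤ r.den * (1 / ((N + 1) * r.den)) * (N + 1) := by gcongr
      _ = 1 := by field_simp
  have hfst : |(latticeMap θ t (r.den, r.num)).fst| ≤ 1 := by
    simpa [abs_mul, abs_of_nonneg (Real.sqrt_nonneg t)] using happrox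
  have hsnd : |(latticeMap θ t (r.den, r.num)).snd| ≤ 1 := by
    simp only [latticeMap_snd, Int.cast_natCast]
    rw [abs_of_nonneg (by positivity), div_le_one (by positivity)]
    exact (Nat.cast_le.2 hden).trans hN'
  rw [← pow_le_pow_iff_left₀ (norm_nonneg _) zero_le_two two_ne_zero,
    norm_sq_eq_fst_sq_add_snd_sq, ← sq_abs, ← sq_abs (latticeMap θ t _).snd]
  nlinarith [abs_nonneg (latticeMap θ t (r.den, r.num)).fst,
    abs_nonneg (latticeMap θ t (r.den, r.num)).snd]

lemma exists_cross_latticeMap_eq_one (ht : 0 < t) {p : ℤ × ℤ} (hp : IsCoprime p.1 p.2) :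
    ∃ q : ℤ × ℤ, cross (latticeMap θ t p) (latticeMap θ t q) = 1 := by
  obtain ⟨a, b, hab⟩ := hp
  refine ⟨(-b, a), ?_⟩
  rw [cross_latticeMap ht]
  exact_mod_cast (by linear_combination hab : p.1 * a - -b * p.2 = 1)

end Lattice

section Equivalences

variable {θ : ℝ}

lemma familyUniformlyDiscrete_of_badlyApproximable (h : BadlyApproximable θ) :
    FamilyUniformlyDiscrete θ := by
  obtain ⟨σ, hσ, hL⟩ := h.exists_pos_le_norm_latticeMap
  refine ⟨σ / 2, by positivity, fun t ht ζ l hl l' hl' => ?_⟩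
  obtain ⟨⟨p, hp⟩, hζl⟩ := And.imp_left mem_latticeFamily_iff.1 hl
  obtain ⟨⟨p', hp'⟩, hζl'⟩ := And.imp_left mem_latticeFamily_iff.1 hl'
  rw [eDist_eq_dist] at hζl hζl'
  have hclose : ‖latticeMap θ t (p - p')‖ < σ := by
    rw [map_sub, hp, hp', ← dist_eq_norm]
    linarith [dist_triangle_left (toLp 2 l) (toLp 2 l') (toLp 2 ζ)]
  have : p = p' := by
    by_contra hne
    exact (hL t ht _ (sub_ne_zero.2 hne)).not_gt hclose
  rw [← ofLp_toLp 2 l, ← ofLp_toLp 2 l', ← hp, ← hp', this]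

lemma badlyApproximable_of_familyUniformlyDiscrete (h : FamilyUniformlyDiscrete θ) :
    BadlyApproximable θ := by
  by_contra hθ
  obtain ⟨s, hs, hdisc⟩ := h
  obtain ⟨t, ht, p, hp, hps⟩ := exists_norm_latticeMap_lt_of_not_badlyApproximable hθ hs
  have h0 : ofLp (latticeMap θ t 0) = 0 := by rw [map_zero, ofLp_zero]
  have hps' : eDist 0 (ofLp (latticeMap θ t p)) < s := by
    rwa [eDist_eq_dist, toLp_ofLp, toLp_zero, dist_zero_left]
  have := hdisc t ht 0 ⟨h0 ▸ ofLp_latticeMap_mem_latticeFamily 0, by simp [eDist, hs]⟩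
    ⟨ofLp_latticeMap_mem_latticeFamily p, hps'⟩
  rw [← h0] at this
  exact hp (latticeMap_injective (by linarith) (ofLp_injective 2 this)).symm

lemma badlyApproximable_of_familyRelativelyDense (h : FamilyRelativelyDense θ) :
    BadlyApproximable θ := by
  by_contra hθ
  obtain ⟨r, hr, hdense⟩ := h
  obtain ⟨t, ht, p, hp, hpr⟩ :=
    exists_norm_latticeMap_lt_of_not_badlyApproximable hθ (ε := 1 / (2 * r)) (by positivity)
  have ht0 : 0 < t := by linarith
  obtain ⟨ζ, hζ⟩ := exists_one_le_two_mul_norm_mul_dist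
    ((map_ne_zero_iff _ (latticeMap_injective (θ := θ) ht0)).2 hp)
  obtain ⟨l, hl, hlr⟩ := hdense t ht (ofLp ζ)
  obtain ⟨p', hp'⟩ := mem_latticeFamily_iff.1 hl
  rw [eDist_eq_dist, toLp_ofLp, ← hp'] at hlr
  have hfar := hζ _ ⟨_, cross_latticeMap ht0 p p'⟩
  have : 2 * (‖latticeMap θ t p‖ * dist ζ (latticeMap θ t p')) < 2 * (1 / (2 * r) * r) := by
    gcongr
  rw [show 2 * (1 / (2 * r) * r) = 1 by field_simp] at this
  linarith

lemma familyRelativelyDense_of_badlyApproximable (h : BadlyApproximable θ) :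
    FamilyRelativelyDense θ := by
  obtain ⟨σ, hσ, hL⟩ := h.exists_pos_le_norm_latticeMap
  refine ⟨1 + √(1 + 1 / σ ^ 2), by positivity, fun t ht ζ => ?_⟩
  have ht0 : 0 < t := by linarith
  obtain ⟨p, hcop, hp2⟩ := exists_isCoprime_norm_latticeMap_le (θ := θ) ht
  have hσp : σ ≤ ‖latticeMap θ t p‖ := hL t ht p fun h0 => not_isCoprime_zero_zero (h0 ▸ hcop)
  obtain ⟨q, hq⟩ := exists_cross_latticeMap_eq_one ht0 hcop
  obtain ⟨a, b, hab⟩ := exists_int_dist_add_smul_le hq (toLp 2 ζ)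
  refine ⟨_, ofLp_latticeMap_mem_latticeFamily (a • p + b • q), ?_⟩
  rw [eDist_eq_dist, toLp_ofLp, map_add, map_zsmul, map_zsmul, ← Int.cast_smul_eq_zsmul ℝ,
    ← Int.cast_smul_eq_zsmul ℝ]
  refine hab.trans_lt ?_
  have : √(‖latticeMap θ t p‖ ^ 2 / 4 + 1 / ‖latticeMap θ t p‖ ^ 2) ≤ √(1 + 1 / σ ^ 2) := by
    gcongr
    nlinarith [norm_nonneg (latticeMap θ t p)]
  linarith [Real.sqrt_pos.2 (by positivity : (0 : ℝ) < 1 + 1 / σ ^ 2)]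

end Equivalences

theorem lattice_family_tfae_general (θ : ℝ) :
    List.TFAE [FamilyRelativelyDense θ, FamilyUniformlyDiscrete θ,
      BadlyApproximable θ] := by
  tfae_have 1 → 3 := badlyApproximable_of_familyRelativelyDense
  tfae_have 3 → 1 := familyRelativelyDense_of_badlyApproximable
  tfae_have 2 → 3 := badlyApproximable_of_familyUniformlyDiscrete
  tfae_have 3 → 2 := familyUniformlyDiscrete_of_badlyApproximable
  tfae_finish

theorem lattice_family_tfae (θ : ℝ) (hθ : Irrational θ) :
    List.TFAE [FamilyRelativelyDense θ, FamilyUniformlyDiscrete θ,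
      BadlyApproximable θ] :=
  lattice_family_tfae_general θ
end

section
/- Let −∞ < β < 1, r > 0, Γ ⊆ ℂ, and Γ' = { γ ∈ Γ : |γ| ≥ 1 }. The following conditions are mutually equivalent: (i) for every r₁ > r there exists M₁ > 0 such that for every z ∈ ℂ with |z| ≥ M₁ there exists ζ ∈ Γ' with |z − ζ| < r₁·|z|^β; (ii) for every r₂ > r there exists M₂ > 0 such that for every z ∈ ℂ with |z| ≥ M₂ there exists ζ ∈ Γ' with |z − ζ| < r₂·|ζ|^β; (iii) for every r₃ > r there exists M₃ > 0 such that for every z ∈ ℂ with |z| ≥ M₃ there exists ζ ∈ Γ' with |z − ζ| < (r₃/2)·(|z|^β + |ζ|^β). -/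
/-!
Put `x = ‖z‖`, `y = ‖ζ‖`. Any of the three conditions forces `|x - y| ≤ ‖z - ζ‖ = O(max x y ^ β)`,
which is `o(max x y)` because `β < 1`; hence `y / x → 1` and, by continuity of `u ↦ u ^ β` at `1`,
also `y ^ β / x ^ β → 1`. So for large `‖z‖` the three weights `x ^ β`, `y ^ β` and their mean agree
up to a factor arbitrarily close to `1`, which the slack `r' > r` absorbs: each condition is
equivalent to the one with weight `min (x ^ β) (y ^ β)`.
-/

open Filter Topology Real

/-- Every point far enough out lies within distance `B s ‖z‖ ‖ζ‖` of some `ζ ∈ S`, at every scale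
`s > r`. The three conditions of the theorem are the cases `B s x y = s * x ^ β`, `s * y ^ β` and
`s / 2 * (x ^ β + y ^ β)`. -/
def RelativelyDense {E : Type*} [SeminormedAddCommGroup E] (S : Set E) (r : ℝ)
    (B : ℝ → ℝ → ℝ → ℝ) : Prop :=
  ∀ s > r, ∃ M > 0, ∀ z : E, M ≤ ‖z‖ → ∃ ζ ∈ S, ‖z - ζ‖ < B s ‖z‖ ‖ζ‖

lemma exists_abs_sub_lt_mul_max {β C ε : ℝ} (hβ : β < 1) (hC : 0 ≤ C) (hε : 0 < ε) :
    ∃ M ≥ 1, ∀ x y : ℝ, M ≤ x → 1 ≤ y → |x - y| < C * (x ^ β + y ^ β) →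
      |x - y| < ε * max x y := by
  set b := max β 0
  have hdecay : Tendsto (fun m : ℝ => 2 * C * m ^ (b - 1)) atTop (𝓝 0) := by
    have := (tendsto_rpow_neg_atTop (y := 1 - b) (by simp [b, hβ])).const_mul (2 * C)
    simpa using this
  obtain ⟨M, hM⟩ := eventually_atTop.1 (hdecay.eventually (gt_mem_nhds hε))
  refine ⟨max M 1, le_max_right _ _, fun x y hx hy hxy => ?_⟩
  set m := max x y
  have hm : 1 ≤ m := hy.trans (le_max_right _ _)
  have hpow : ∀ u, 1 ≤ u → u ≤ m → u ^ β ≤ m ^ b := fun u hu hum =>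
    (rpow_le_rpow_of_exponent_le hu (le_max_left _ _)).trans
      (rpow_le_rpow (by linarith) hum (le_max_right _ _))
  have hxm : 1 ≤ x := (le_max_right _ _).trans hx
  calc |x - y| < C * (x ^ β + y ^ β) := hxy
    _ ≤ C * (2 * m ^ b) := by
        gcongr
        linarith [hpow x hxm (le_max_left _ _), hpow y hy (le_max_right _ _)]
    _ = 2 * C * m ^ (b - 1) * m := by rw [rpow_sub_one (by positivity)]; field_simp
    _ < ε * m := by
        gcongr
        exact hM m ((le_max_left _ _).trans (hx.trans (le_max_left _ _)))

lemma abs_div_sub_one_lt_of_abs_sub_lt_mul_max {x y ε : ℝ} (hx : 0 < x) (hε : ε ≤ 1 / 2)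
    (h : |x - y| < ε * max x y) : |y / x - 1| < 2 * ε := by
  have hmax : max x y < 2 * x := by
    rcases le_total y x with hyx | hxy
    · rw [max_eq_left hyx]; linarith
    · rw [max_eq_right hxy, abs_sub_comm, abs_of_nonneg (by linarith)] at h
      rw [max_eq_right hxy]; nlinarith
  have hε0 : 0 < ε :=
    pos_of_mul_pos_left ((abs_nonneg _).trans_lt h) (hx.le.trans (le_max_left x y))
  rw [div_sub_one hx.ne', abs_div, abs_of_pos hx, div_lt_iff₀ hx, abs_sub_comm]
  calc |x - y| < ε * max x y := h
    _ ≤ ε * (2 * x) := by gcongr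
    _ = 2 * ε * x := by ring

lemma exists_rpow_lt_of_abs_sub_one_lt (γ : ℝ) {t : ℝ} (ht : 1 < t) :
    ∃ δ > 0, ∀ u : ℝ, |u - 1| < δ → u ^ γ < t := by
  have hcont : ContinuousAt (fun u : ℝ => u ^ γ) 1 :=
    continuousAt_rpow_const _ _ (Or.inl one_ne_zero)
  have := hcont.eventually (gt_mem_nhds (by simpa using ht))
  simpa [Metric.eventually_nhds_iff, dist_eq] using this

lemma exists_rpow_max_lt_mul_min {β C t : ℝ} (hβ : β < 1) (hC : 0 ≤ C) (ht : 1 < t) :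
    ∃ M, ∀ x y : ℝ, M ≤ x → 1 ≤ y → |x - y| < C * (x ^ β + y ^ β) →
      max (x ^ β) (y ^ β) < t * min (x ^ β) (y ^ β) := by
  obtain ⟨δ₁, hδ₁, h₁⟩ := exists_rpow_lt_of_abs_sub_one_lt β ht
  obtain ⟨δ₂, hδ₂, h₂⟩ := exists_rpow_lt_of_abs_sub_one_lt (-β) ht
  set δ := min δ₁ δ₂
  have hδ : 0 < δ := lt_min hδ₁ hδ₂
  obtain ⟨M, hM1, hM⟩ :=
    exists_abs_sub_lt_mul_max hβ hC (lt_min (half_pos hδ) (by norm_num : (0 : ℝ) < 1 / 2))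
  refine ⟨M, fun x y hx hy hxy => ?_⟩
  have hx0 : 0 < x := by linarith
  have hy0 : 0 < y := by linarith
  have hu : |y / x - 1| < δ := by
    refine (abs_div_sub_one_lt_of_abs_sub_lt_mul_max hx0 (min_le_right _ _) (hM x y hx hy hxy))
      |>.trans_le ?_
    linarith [min_le_left (δ / 2) (1 / 2)]
  have hyx : y ^ β < t * x ^ β := by
    have := h₁ _ (hu.trans_le (min_le_left _ _))
    rwa [div_rpow hy0.le hx0.le, div_lt_iff₀ (rpow_pos_of_pos hx0 _)] at this
  have hxy' : x ^ β < t * y ^ β := by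
    have := h₂ _ (hu.trans_le (min_le_right _ _))
    rwa [rpow_neg (by positivity), div_rpow hy0.le hx0.le, inv_div,
      div_lt_iff₀ (rpow_pos_of_pos hy0 _)] at this
  rw [mul_min_of_nonneg _ _ (by linarith)]
  exact max_lt (lt_min (lt_mul_of_one_lt_left (rpow_pos_of_pos hx0 _) ht) hxy')
    (lt_min hyx (lt_mul_of_one_lt_left (rpow_pos_of_pos hy0 _) ht))

namespace RelativelyDense

variable {E : Type*} [SeminormedAddCommGroup E] {S : Set E} {r β : ℝ} {B B' : ℝ → ℝ → ℝ → ℝ}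

lemma mono (hBB' : ∀ s > r, ∀ x y, B s x y ≤ B' s x y) (h : RelativelyDense S r B) :
    RelativelyDense S r B' := by
  intro s hs
  obtain ⟨M, hM, hS⟩ := h s hs
  refine ⟨M, hM, fun z hz => ?_⟩
  obtain ⟨ζ, hζ, hlt⟩ := hS z hz
  exact ⟨ζ, hζ, hlt.trans_le (hBB' s hs _ _)⟩

lemma to_min_rpow (hr : 0 < r) (hβ : β < 1) (hS : ∀ ζ ∈ S, 1 ≤ ‖ζ‖)
    (hB : ∀ s > 0, ∀ x y, B s x y ≤ s * max (x ^ β) (y ^ β)) (h : RelativelyDense S r B) :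
    RelativelyDense S r fun s x y => s * min (x ^ β) (y ^ β) := by
  intro s hs
  obtain ⟨s', hrs', hs's⟩ := exists_between hs
  have hs' : 0 < s' := hr.trans hrs'
  obtain ⟨M₀, hM₀⟩ := exists_rpow_max_lt_mul_min hβ hs'.le ((one_lt_div hs').2 hs's)
  obtain ⟨M, hM, hM'⟩ := h s' hrs'
  refine ⟨max M M₀, lt_max_of_lt_left hM, fun z hz => ?_⟩
  obtain ⟨ζ, hζ, hlt⟩ := hM' z (le_of_max_le_left hz)
  refine ⟨ζ, hζ, ?_⟩
  have hmax := hlt.trans_le (hB s' hs' ‖z‖ ‖ζ‖)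
  have hnear : |‖z‖ - ‖ζ‖| < s' * (‖z‖ ^ β + ‖ζ‖ ^ β) :=
    calc |‖z‖ - ‖ζ‖| ≤ ‖z - ζ‖ := abs_norm_sub_norm_le z ζ
      _ < s' * max (‖z‖ ^ β) (‖ζ‖ ^ β) := hmax
      _ ≤ s' * (‖z‖ ^ β + ‖ζ‖ ^ β) := by
          gcongr; exact max_le_add_of_nonneg (by positivity) (by positivity)
  calc ‖z - ζ‖ < s' * max (‖z‖ ^ β) (‖ζ‖ ^ β) := hmax
    _ ≤ s' * (s / s' * min (‖z‖ ^ β) (‖ζ‖ ^ β)) := by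
        gcongr; exact (hM₀ _ _ (le_of_max_le_right hz) (hS ζ hζ) hnear).le
    _ = s * min (‖z‖ ^ β) (‖ζ‖ ^ β) := by field_simp

lemma iff_min_rpow (hr : 0 < r) (hβ : β < 1) (hS : ∀ ζ ∈ S, 1 ≤ ‖ζ‖)
    (hBmin : ∀ s > 0, ∀ x y, s * min (x ^ β) (y ^ β) ≤ B s x y)
    (hBmax : ∀ s > 0, ∀ x y, B s x y ≤ s * max (x ^ β) (y ^ β)) :
    RelativelyDense S r B ↔ RelativelyDense S r fun s x y => s * min (x ^ β) (y ^ β) :=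
  ⟨to_min_rpow hr hβ hS hBmax, mono fun s hs => hBmin s (hr.trans hs)⟩

end RelativelyDense

theorem relatively_dense_characterizations (β r : ℝ) (hβ : β < 1) (hr : 0 < r)
    (Γ : Set ℂ) (Γ' : Set ℂ) (hΓ' : Γ' = {γ ∈ Γ | 1 ≤ ‖γ‖}) :
    List.TFAE
      [∀ r₁ > r, ∃ M₁ > 0, ∀ z : ℂ, M₁ ≤ ‖z‖ →
          ∃ ζ ∈ Γ', ‖z - ζ‖ < r₁ * ‖z‖ ^ β,
        ∀ r₂ > r, ∃ M₂ > 0, ∀ z : ℂ, M₂ ≤ ‖z‖ →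
          ∃ ζ ∈ Γ', ‖z - ζ‖ < r₂ * ‖ζ‖ ^ β,
        ∀ r₃ > r, ∃ M₃ > 0, ∀ z : ℂ, M₃ ≤ ‖z‖ →
          ∃ ζ ∈ Γ', ‖z - ζ‖ < r₃ / 2 * (‖z‖ ^ β + ‖ζ‖ ^ β)] := by
  have hS : ∀ ζ ∈ Γ', 1 ≤ ‖ζ‖ := by rw [hΓ']; exact fun ζ hζ => hζ.2
  refine List.tfae_of_forall (RelativelyDense Γ' r fun s x y => s * min (x ^ β) (y ^ β)) _ ?_
  simp only [List.mem_cons, List.not_mem_nil, or_false]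
  rintro _ (rfl | rfl | rfl)
  · exact RelativelyDense.iff_min_rpow (B := fun s x y => s * x ^ β) hr hβ hS
      (fun s hs x y => by gcongr; exact min_le_left _ _)
      (fun s hs x y => by gcongr; exact le_max_left _ _)
  · exact RelativelyDense.iff_min_rpow (B := fun s x y => s * y ^ β) hr hβ hS
      (fun s hs x y => by gcongr; exact min_le_right _ _)
      (fun s hs x y => by gcongr; exact le_max_right _ _)
  · refine RelativelyDense.iff_min_rpow (B := fun s x y => s / 2 * (x ^ β + y ^ β)) hr hβ hS
      (fun s hs x y => ?_) (fun s hs x y => ?_)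
    · nlinarith [min_le_left (x ^ β) (y ^ β), min_le_right (x ^ β) (y ^ β)]
    · nlinarith [le_max_left (x ^ β) (y ^ β), le_max_right (x ^ β) (y ^ β)]
end

section
/- Let −∞ < β < 1, s > 0, let Γ ⊆ ℂ be locally finite (i.e., { ζ ∈ Γ : |ζ| < r } is finite for every r > 0), and let Γ' = { γ ∈ Γ : |γ| ≥ 1 }. The following conditions are mutually equivalent: (i) for every s₁ with 0 < s₁ < s there exists M₁ > 0 such that for every z ∈ ℂ with |z| ≥ M₁ the set { ζ ∈ Γ' : |z − ζ| < s₁·|z|^β } has at most one element; (ii) for every s₂ with 0 < s₂ < s there exists M₂ > 0 such that for every z ∈ ℂ with |z| ≥ M₂ the set { ζ ∈ Γ' : |z − ζ| < s₂·|ζ|^β } has at most one element; (iii) for every s₃ with 0 < s₃ < s there exists M₃ > 0 such that for every z ∈ ℂ with |z| ≥ M₃ the set { ζ ∈ Γ' : |z − ζ| < (s₃/2)·(|z|^β + |ζ|^β) } has at most one element. -/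
/-!
Since `β < 1`, the radius `s' · max(|z|^β, |ζ|^β)` is `o(|z|)`, so a point `ζ` with
`|z - ζ|` below it satisfies `|ζ| / |z| → 1` as `|z| → ∞`, hence also `|ζ|^β / |z|^β → 1`.
For large `|z|` the three radii therefore differ by a factor arbitrarily close to `1`, and
shrinking `s'` to any `s'' ∈ (s', s)` absorbs that factor.
-/

open Real Filter Topology

lemma exists_one_lt_rpow_le (β : ℝ) {t : ℝ} (ht : 1 < t) : ∃ u, 1 < u ∧ u ^ β ≤ t := by
  have hlt : ∀ᶠ u in 𝓝[>] (1 : ℝ), u ^ β < t :=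
    nhdsWithin_le_nhds <| (continuousAt_rpow_const 1 β (Or.inl one_ne_zero)).eventually
      (gt_mem_nhds (by simpa using ht))
  obtain ⟨u, hut, hu⟩ := (hlt.and self_mem_nhdsWithin).exists
  exact ⟨u, hu, hut.le⟩

lemma eventually_mul_rpow_le_mul_self {γ : ℝ} (hγ : γ < 1) (c : ℝ) {ε : ℝ} (hε : 0 < ε) :
    ∀ᶠ m in atTop, c * m ^ γ ≤ ε * m := by
  have hlim : Tendsto (fun m : ℝ => c * m ^ (γ - 1)) atTop (𝓝 0) := by
    simpa [neg_sub] using (tendsto_rpow_neg_atTop (sub_pos.2 hγ)).const_mul c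
  filter_upwards [hlim.eventually (ge_mem_nhds hε), eventually_gt_atTop 0] with m hm hm0
  calc c * m ^ γ = c * m ^ (γ - 1) * m := by
        rw [rpow_sub_one hm0.ne', mul_assoc, div_mul_cancel₀ _ hm0.ne']
    _ ≤ ε * m := by gcongr

lemma max_rpow_le_rpow_max {x y β γ : ℝ} (hx : 1 ≤ x) (hy : 1 ≤ y) (hβγ : β ≤ γ)
    (hγ : 0 ≤ γ) : max (x ^ β) (y ^ β) ≤ max x y ^ γ := by
  have key : ∀ {a}, 1 ≤ a → a ≤ max x y → a ^ β ≤ max x y ^ γ := fun ha ham =>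
    (rpow_le_rpow_of_exponent_le ha hβγ).trans (rpow_le_rpow (by linarith) ham hγ)
  exact max_le (key hx (le_max_left x y)) (key hy (le_max_right x y))

lemma le_mul_of_abs_sub_le_one_sub_inv_mul_max {x y u : ℝ} (hu : 1 ≤ u) (hy : 0 ≤ y)
    (h : |x - y| ≤ (1 - u⁻¹) * max x y) : x ≤ u * y := by
  rcases le_total x y with hxy | hyx
  · exact hxy.trans (le_mul_of_one_le_left hy hu)
  · rw [abs_of_nonneg (sub_nonneg.2 hyx), max_eq_left hyx] at h
    rw [← inv_mul_le_iff₀ (by linarith)]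
    linarith

lemma rpow_le_rpow_abs_mul_rpow {x y u : ℝ} (β : ℝ) (hx : 0 < x) (hy : 0 < y)
    (hxy : x ≤ u * y) (hyx : y ≤ u * x) : x ^ β ≤ u ^ |β| * y ^ β := by
  have hu : 0 < u := pos_of_mul_pos_left (hy.trans_le hyx) hx.le
  have hlog : |log x - log y| ≤ log u := by
    have h₁ := log_le_log hx hxy
    have h₂ := log_le_log hy hyx
    rw [log_mul hu.ne' hy.ne'] at h₁
    rw [log_mul hu.ne' hx.ne'] at h₂
    exact abs_sub_le_iff.2 ⟨by linarith, by linarith⟩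
  have hexp : log x * β ≤ log u * |β| + log y * β :=
    calc log x * β = β * (log x - log y) + log y * β := by ring
      _ ≤ |β| * |log x - log y| + log y * β :=
        add_le_add_left ((le_abs_self _).trans (abs_mul _ _).le) _
      _ ≤ log u * |β| + log y * β := by
        rw [mul_comm (log u)]; gcongr
  rw [rpow_def_of_pos hx, rpow_def_of_pos hu, rpow_def_of_pos hy, ← exp_add]
  exact exp_le_exp.2 hexp

lemma max_rpow_le_mul_min_rpow {x y u : ℝ} (β : ℝ) (hu : 1 ≤ u) (hx : 0 < x) (hy : 0 < y)
    (hxy : x ≤ u * y) (hyx : y ≤ u * x) :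
    max (x ^ β) (y ^ β) ≤ u ^ |β| * min (x ^ β) (y ^ β) := by
  have hu' : 1 ≤ u ^ |β| := one_le_rpow hu (abs_nonneg β)
  rw [mul_min_of_nonneg _ _ (by positivity)]
  exact max_le
    (le_min (le_mul_of_one_le_left (by positivity) hu') (rpow_le_rpow_abs_mul_rpow β hx hy hxy hyx))
    (le_min (rpow_le_rpow_abs_mul_rpow β hy hx hyx hxy) (le_mul_of_one_le_left (by positivity) hu'))

lemma exists_mul_max_rpow_le_mul_min_rpow {β s₁ s₂ : ℝ} (hβ : β < 1) (hs₁ : 0 < s₁)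
    (hs₁₂ : s₁ < s₂) :
    ∃ M, ∀ x y : ℝ, M ≤ x → 1 ≤ y → |x - y| < s₁ * max (x ^ β) (y ^ β) →
      s₁ * max (x ^ β) (y ^ β) ≤ s₂ * min (x ^ β) (y ^ β) := by
  obtain ⟨u, hu, hut⟩ := exists_one_lt_rpow_le |β| ((one_lt_div hs₁).2 hs₁₂)
  obtain ⟨M, hM⟩ := eventually_atTop.1 <| eventually_mul_rpow_le_mul_self
    (max_lt hβ one_pos) s₁ (sub_pos.2 (inv_lt_one_of_one_lt₀ hu))
  refine ⟨max M 1, fun x y hx hy h => ?_⟩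
  have hx1 : 1 ≤ x := le_of_max_le_right hx
  have hclose : |x - y| ≤ (1 - u⁻¹) * max x y :=
    calc |x - y| ≤ s₁ * max (x ^ β) (y ^ β) := h.le
      _ ≤ s₁ * max x y ^ max β 0 := by
        gcongr; exact max_rpow_le_rpow_max hx1 hy (le_max_left β 0) (le_max_right β 0)
      _ ≤ (1 - u⁻¹) * max x y := hM _ ((le_of_max_le_left hx).trans (le_max_left x y))
  have hxy := le_mul_of_abs_sub_le_one_sub_inv_mul_max hu.le (by linarith) hclose
  have hyx := le_mul_of_abs_sub_le_one_sub_inv_mul_max (x := y) (y := x) hu.le (by linarith)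
    (by rwa [abs_sub_comm, max_comm])
  have hmin : 0 ≤ min (x ^ β) (y ^ β) := le_min (by positivity) (by positivity)
  calc s₁ * max (x ^ β) (y ^ β)
      ≤ s₁ * (u ^ |β| * min (x ^ β) (y ^ β)) := by
        gcongr; exact max_rpow_le_mul_min_rpow β hu.le (by linarith) (by linarith) hxy hyx
    _ ≤ s₁ * (s₂ / s₁ * min (x ^ β) (y ^ β)) := by gcongr
    _ = s₂ * min (x ^ β) (y ^ β) := by field_simp

def UniformlyDiscreteWrt (ρ : ℝ → ℝ → ℝ → ℝ) (s : ℝ) (Γ : Set ℂ) : Prop :=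
  ∀ s', 0 < s' → s' < s → ∃ M > 0, ∀ z : ℂ, M ≤ ‖z‖ →
    {ζ ∈ Γ | ‖z - ζ‖ < ρ s' ‖z‖ ‖ζ‖}.Subsingleton

theorem UniformlyDiscreteWrt.of_radius_le {β s : ℝ} {Γ : Set ℂ} {ρ₁ ρ₂ : ℝ → ℝ → ℝ → ℝ}
    (hβ : β < 1) (hΓ : ∀ ζ ∈ Γ, 1 ≤ ‖ζ‖)
    (hρ₁ : ∀ s' x y, 0 < s' → ρ₁ s' x y ≤ s' * max (x ^ β) (y ^ β))
    (hρ₂ : ∀ s' x y, 0 < s' → s' * min (x ^ β) (y ^ β) ≤ ρ₂ s' x y)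
    (h : UniformlyDiscreteWrt ρ₂ s Γ) : UniformlyDiscreteWrt ρ₁ s Γ := by
  intro s₁ hs₁ hs₁s
  obtain ⟨M₂, hM₂, hsub⟩ := h ((s₁ + s) / 2) (by linarith) (by linarith)
  obtain ⟨M, hM⟩ := exists_mul_max_rpow_le_mul_min_rpow hβ hs₁
    (show s₁ < (s₁ + s) / 2 by linarith)
  refine ⟨max M M₂, hM₂.trans_le (le_max_right _ _), fun z hz => ?_⟩
  refine (hsub z ((le_max_right _ _).trans hz)).anti fun ζ ⟨hζ, hzζ⟩ => ⟨hζ, ?_⟩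
  have hlt : ‖z - ζ‖ < s₁ * max (‖z‖ ^ β) (‖ζ‖ ^ β) := hzζ.trans_le (hρ₁ _ _ _ hs₁)
  calc ‖z - ζ‖ < _ := hlt
    _ ≤ (s₁ + s) / 2 * min (‖z‖ ^ β) (‖ζ‖ ^ β) :=
      hM _ _ ((le_max_left _ _).trans hz) (hΓ ζ hζ)
        ((abs_norm_sub_norm_le z ζ).trans_lt hlt)
    _ ≤ ρ₂ ((s₁ + s) / 2) ‖z‖ ‖ζ‖ := hρ₂ _ _ _ (by linarith)

lemma half_mul_add_le_mul_max {s : ℝ} (hs : 0 ≤ s) (a b : ℝ) :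
    s / 2 * (a + b) ≤ s * max a b := by
  nlinarith [le_max_left a b, le_max_right a b]

lemma mul_min_le_half_mul_add {s : ℝ} (hs : 0 ≤ s) (a b : ℝ) :
    s * min a b ≤ s / 2 * (a + b) := by
  nlinarith [min_le_left a b, min_le_right a b]

theorem uniformly_discrete_characterizations_general (β s : ℝ) (hβ : β < 1)
    (Γ : Set ℂ) (Γ' : Set ℂ) (hΓ' : Γ' = {γ ∈ Γ | 1 ≤ ‖γ‖}) :
    List.TFAE
      [∀ s₁, 0 < s₁ → s₁ < s → ∃ M₁ > 0, ∀ z : ℂ, M₁ ≤ ‖z‖ →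
          {ζ ∈ Γ' | ‖z - ζ‖ < s₁ * ‖z‖ ^ β}.Subsingleton,
        ∀ s₂, 0 < s₂ → s₂ < s → ∃ M₂ > 0, ∀ z : ℂ, M₂ ≤ ‖z‖ →
          {ζ ∈ Γ' | ‖z - ζ‖ < s₂ * ‖ζ‖ ^ β}.Subsingleton,
        ∀ s₃, 0 < s₃ → s₃ < s → ∃ M₃ > 0, ∀ z : ℂ, M₃ ≤ ‖z‖ →
          {ζ ∈ Γ' | ‖z - ζ‖ <
            s₃ / 2 * (‖z‖ ^ β + ‖ζ‖ ^ β)}.Subsingleton] := by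
  have hΓ'1 : ∀ ζ ∈ Γ', 1 ≤ ‖ζ‖ := hΓ' ▸ fun _ hζ => hζ.2
  tfae_have 1 → 2 := UniformlyDiscreteWrt.of_radius_le (ρ₂ := fun s' x _ => s' * x ^ β) hβ hΓ'1
    (fun _ _ _ hs' => mul_le_mul_of_nonneg_left (le_max_right _ _) hs'.le)
    (fun _ _ _ hs' => mul_le_mul_of_nonneg_left (min_le_left _ _) hs'.le)
  tfae_have 2 → 3 := UniformlyDiscreteWrt.of_radius_le (ρ₂ := fun s' _ y => s' * y ^ β) hβ hΓ'1
    (fun _ _ _ hs' => half_mul_add_le_mul_max hs'.le _ _)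
    (fun _ _ _ hs' => mul_le_mul_of_nonneg_left (min_le_right _ _) hs'.le)
  tfae_have 3 → 1 := UniformlyDiscreteWrt.of_radius_le
    (ρ₂ := fun s' x y => s' / 2 * (x ^ β + y ^ β)) hβ hΓ'1
    (fun _ _ _ hs' => mul_le_mul_of_nonneg_left (le_max_left _ _) hs'.le)
    (fun _ _ _ hs' => mul_min_le_half_mul_add hs'.le _ _)
  tfae_finish

theorem uniformly_discrete_characterizations (β s : ℝ) (hβ : β < 1) (hs : 0 < s)
    (Γ : Set ℂ) (hloc : ∀ r > 0, {ζ ∈ Γ | ‖ζ‖ < r}.Finite)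
    (Γ' : Set ℂ) (hΓ' : Γ' = {γ ∈ Γ | 1 ≤ ‖γ‖}) :
    List.TFAE
      [∀ s₁, 0 < s₁ → s₁ < s → ∃ M₁ > 0, ∀ z : ℂ, M₁ ≤ ‖z‖ →
          {ζ ∈ Γ' | ‖z - ζ‖ < s₁ * ‖z‖ ^ β}.Subsingleton,
        ∀ s₂, 0 < s₂ → s₂ < s → ∃ M₂ > 0, ∀ z : ℂ, M₂ ≤ ‖z‖ →
          {ζ ∈ Γ' | ‖z - ζ‖ < s₂ * ‖ζ‖ ^ β}.Subsingleton,
        ∀ s₃, 0 < s₃ → s₃ < s → ∃ M₃ > 0, ∀ z : ℂ, M₃ ≤ ‖z‖ →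
          {ζ ∈ Γ' | ‖z - ζ‖ <
            s₃ / 2 * (‖z‖ ^ β + ‖ζ‖ ^ β)}.Subsingleton] :=
  uniformly_discrete_characterizations_general β s hβ Γ Γ' hΓ'
end

section
/- Let r', r > 0 with r < r' < 2r, let 0 < β < 1, and let z, ζ ∈ ℂ. If |z − ζ| < r·|z|^β and |z| ≥ (r·r'/(2(r' − r)))^{1/(1−β)}, then |z − ζ| < (r'/2)·|z|^β + (r'/2)·|ζ|^β. -/
/-!
Write `a = ‖z‖`, `b = ‖ζ‖` and `c = (2r - r') / r' ∈ (0, 1)`, so that `r = (1 - c) M` with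
`M = r r' / (2 (r' - r))`. The lower bound on `a` says `M ≤ a ^ (1 - β)`, i.e. `r a ^ β ≤ (1 - c) a`,
hence `a - b < (1 - c) a`, i.e. `c a < b`. Since `c ≤ c ^ β`, this gives `c a ^ β < b ^ β`, and so
`‖z - ζ‖ < r a ^ β = (r' / 2) a ^ β + (r' / 2) c a ^ β < (r' / 2) a ^ β + (r' / 2) b ^ β`.
-/

open Real

lemma mul_rpow_le_of_le_rpow_one_sub {M a β : ℝ} (ha : 0 < a) (h : M ≤ a ^ (1 - β)) :
    M * a ^ β ≤ a :=
  calc M * a ^ β ≤ a ^ (1 - β) * a ^ β := by gcongr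
    _ = a := by rw [← rpow_add ha, sub_add_cancel, rpow_one]

lemma mul_rpow_lt_rpow_of_mul_lt {a b c β : ℝ} (hc0 : 0 ≤ c) (hc1 : c ≤ 1) (ha : 0 ≤ a)
    (hβ0 : 0 < β) (hβ1 : β ≤ 1) (h : c * a < b) : c * a ^ β < b ^ β :=
  calc c * a ^ β ≤ c ^ β * a ^ β := by gcongr; exact self_le_rpow_of_le_one hc0 hc1 hβ1
    _ = (c * a) ^ β := (mul_rpow hc0 ha).symm
    _ < b ^ β := rpow_lt_rpow (mul_nonneg hc0 ha) h hβ0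

theorem lemma_15 (r r' β : ℝ) (hr : 0 < r) (hr' : r < r') (hr'2 : r' < 2 * r)
    (hβ0 : 0 < β) (hβ1 : β < 1) (z ζ : ℂ)
    (h1 : ‖z - ζ‖ < r * ‖z‖ ^ β)
    (h2 : (r * r' / (2 * (r' - r))) ^ (1 / (1 - β)) ≤ ‖z‖) :
    ‖z - ζ‖ < r' / 2 * ‖z‖ ^ β + r' / 2 * ‖ζ‖ ^ β := by
  set M := r * r' / (2 * (r' - r))
  set c := (2 * r - r') / r'
  have hr'0 : 0 < r' := hr.trans hr'
  have hr'r : 0 < r' - r := sub_pos.2 hr'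
  have hM : 0 < M := div_pos (mul_pos hr hr'0) (by positivity)
  have hc0 : 0 < c := div_pos (by linarith) hr'0
  have hc1 : c ≤ 1 := (div_le_one hr'0).2 (by linarith)
  have hcM : (1 - c) * M = r := by simp only [M, c]; field_simp; ring
  have hcr : r' / 2 * c = r - r' / 2 := by simp only [c]; field_simp
  have ha : 0 < ‖z‖ := (rpow_pos_of_pos hM _).trans_le h2
  have hMa : M ≤ ‖z‖ ^ (1 - β) := by
    rwa [one_div, rpow_inv_le_iff_of_pos hM.le ha.le (by linarith)] at h2
  have hthreshold : r * ‖z‖ ^ β ≤ (1 - c) * ‖z‖ := by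
    rw [← hcM, mul_assoc]
    exact mul_le_mul_of_nonneg_left (mul_rpow_le_of_le_rpow_one_sub ha hMa) (by linarith)
  have hcb : c * ‖z‖ < ‖ζ‖ := by linarith [norm_sub_norm_le z ζ]
  have hcβ := mul_lt_mul_of_pos_left
    (mul_rpow_lt_rpow_of_mul_lt hc0.le hc1 ha.le hβ0 hβ1.le hcb) (half_pos hr'0)
  rw [← mul_assoc, hcr] at hcβ
  linarith
end

section
/- Let r' > r > 0, let 0 < β < 1, and let z, ζ ∈ ℂ with |z| ≥ (r·r'/(r' − r))^{1/(1−β)}. If either |z − ζ| < (r/2)·|z|^β + (r/2)·|ζ|^β or |z − ζ| < r·|z|^β, then |z − ζ| < r'·|ζ|^β. -/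
/-!
Write `a = |z|`, `b = |ζ|`, `d = |z - ζ|`. The bound on `|z|` says exactly that
`a ^ (1 - β) ≥ r r' / (r' - r)`, i.e. `r a ^ β ≤ (1 - r / r') a`. So if `d < r a ^ β`,
then `b ≥ a - d > (r / r') a`, and since `t ≤ t ^ β` for `t ∈ [0, 1]`,
`r' b ^ β > r' (r / r') ^ β a ^ β ≥ r a ^ β > d`. The symmetric hypothesis reduces to this
case when `|ζ| ≤ |z|`, and is immediate otherwise.
-/

namespace Real

lemma mul_rpow_le_of_rpow_one_div_le {M a β : ℝ} (hM : 0 < M) (hβ : β < 1)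
    (ha : M ^ (1 / (1 - β)) ≤ a) : M * a ^ β ≤ a := by
  have ha0 : 0 < a := (rpow_pos_of_pos hM _).trans_le ha
  have hM_le : M ≤ a ^ (1 - β) := by
    rwa [one_div, rpow_inv_le_iff_of_pos hM.le ha0.le (by linarith)] at ha
  rwa [rpow_sub ha0, rpow_one, le_div_iff₀ (rpow_pos_of_pos ha0 _)] at hM_le

lemma mul_rpow_le_rpow_mul {t x β : ℝ} (ht0 : 0 ≤ t) (ht1 : t ≤ 1) (hβ : β ≤ 1)
    (hx : 0 ≤ x) : t * x ^ β ≤ (t * x) ^ β := by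
  rw [mul_rpow ht0 hx]
  exact mul_le_mul_of_nonneg_right (self_le_rpow_of_le_one ht0 ht1 hβ) (rpow_nonneg hx _)

end Real

open Real in
lemma lt_mul_rpow_of_sub_le {r r' β a b d : ℝ} (hr : 0 < r) (hr' : r < r')
    (hβ0 : 0 < β) (hβ1 : β < 1) (ha : (r * r' / (r' - r)) ^ (1 / (1 - β)) ≤ a)
    (hab : a - d ≤ b) (hd : d < r * a ^ β) : d < r' * b ^ β := by
  have hr'0 : 0 < r' := hr.trans hr'
  have hgap : 0 < r' - r := sub_pos.2 hr'
  have hM0 : 0 < r * r' / (r' - r) := by positivity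
  have ha0 : 0 ≤ a := (rpow_nonneg hM0.le _).trans ha
  have hM := mul_rpow_le_of_rpow_one_div_le hM0 hβ1 ha
  have hab' : r / r' * a < b := by
    rw [div_mul_eq_mul_div, div_lt_iff₀ hr'0]
    rw [div_mul_eq_mul_div, div_le_iff₀ hgap] at hM
    calc r * a ≤ r' * (a - r * a ^ β) := by linarith
      _ < r' * b := mul_lt_mul_of_pos_left (by linarith) hr'0
      _ = b * r' := mul_comm _ _
  have hpow : r / r' * a ^ β < b ^ β :=
    (mul_rpow_le_rpow_mul (by positivity) ((div_le_one hr'0).2 hr'.le) hβ1.le ha0).trans_lt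
      (rpow_lt_rpow (by positivity) hab' hβ0)
  calc d < r * a ^ β := hd
    _ = r' * (r / r' * a ^ β) := by field_simp
    _ < r' * b ^ β := mul_lt_mul_of_pos_left hpow hr'0

theorem lemma_2 (r r' β : ℝ) (hr : 0 < r) (hr' : r < r')
    (hβ0 : 0 < β) (hβ1 : β < 1) (z ζ : ℂ)
    (hM : (r * r' / (r' - r)) ^ (1 / (1 - β)) ≤ ‖z‖)
    (h : ‖z - ζ‖ < r / 2 * ‖z‖ ^ β + r / 2 * ‖ζ‖ ^ β ∨
      ‖z - ζ‖ < r * ‖z‖ ^ β) :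
    ‖z - ζ‖ < r' * ‖ζ‖ ^ β := by
  have hsub : ‖z‖ - ‖z - ζ‖ ≤ ‖ζ‖ := by linarith [norm_sub_norm_le z ζ]
  have key := lt_mul_rpow_of_sub_le hr hr' hβ0 hβ1 hM hsub
  rcases h with h | h
  · have hr2 : 0 ≤ r / 2 := by positivity
    rcases le_total ‖ζ‖ ‖z‖ with hζz | hzζ
    · have := mul_le_mul_of_nonneg_left (Real.rpow_le_rpow (norm_nonneg _) hζz hβ0.le) hr2
      exact key (by linarith)
    · have := mul_le_mul_of_nonneg_left (Real.rpow_le_rpow (norm_nonneg _) hzζ hβ0.le) hr2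
      have := mul_le_mul_of_nonneg_right hr'.le (Real.rpow_nonneg (norm_nonneg ζ) β)
      linarith
  · exact key h
end

section
/- Let θ be an irrational real number, and for t ≥ 1 let Λ(t) = { ((mθ − n)·√t, m/√t) : m, n ∈ ℤ } ⊆ ℝ². If the family {Λ(t)}_{t≥1} is relatively dense, then θ is badly approximable. -/
/-!
Fix `q ≥ 1` and `p`, and put `α = qθ - p`. For every `t > 0` the linear form
`x ↦ -x₁ q/√t + x₂ α√t` takes integer values on `Λ(t)`, so `Λ(t)` lies on parallel lines
spaced `1/|w|` apart, `w = (-q/√t, α√t)`, and the point midway between two of them stays at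
distance at least `1/(2|w|)` from `Λ(t)`. The choice `t = q/|α|` minimises `|w|² = 2q|α|`,
so a covering radius `r` forces `1 ≤ 8r²q|α|`.
-/

lemma eDist_sq (x y : ℝ × ℝ) : eDist x y ^ 2 = (x.1 - y.1) ^ 2 + (x.2 - y.2) ^ 2 :=
  Real.sq_sqrt (by positivity)

lemma sq_sub_linear_le_eDist_sq_mul (x y : ℝ × ℝ) (a b : ℝ) :
    (x.1 * a + x.2 * b - (y.1 * a + y.2 * b)) ^ 2 ≤ eDist x y ^ 2 * (a ^ 2 + b ^ 2) := by
  rw [eDist_sq]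
  nlinarith [sq_nonneg ((x.1 - y.1) * b - (x.2 - y.2) * a)]

lemma one_le_four_mul_sq_half_sub_intCast (k : ℤ) : 1 ≤ 4 * (1 / 2 - (k : ℝ)) ^ 2 := by
  rcases le_or_gt k 0 with hk | hk
  · have : (k : ℝ) ≤ 0 := by exact_mod_cast hk
    nlinarith
  · have : (1 : ℝ) ≤ k := by exact_mod_cast hk
    nlinarith

lemma exists_one_le_four_mul_eDist_sq_mul_of_intCast_linear {S : Set (ℝ × ℝ)} {a b : ℝ}
    (hab : 0 < a ^ 2 + b ^ 2) (hS : ∀ l ∈ S, ∃ k : ℤ, l.1 * a + l.2 * b = k) :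
    ∃ ζ : ℝ × ℝ, ∀ l ∈ S, 1 ≤ 4 * eDist ζ l ^ 2 * (a ^ 2 + b ^ 2) := by
  set ζ : ℝ × ℝ := (a / (2 * (a ^ 2 + b ^ 2)), b / (2 * (a ^ 2 + b ^ 2)))
  have hζ : ζ.1 * a + ζ.2 * b = 1 / 2 := by
    simp only [ζ]
    field_simp
  refine ⟨ζ, fun l hl => ?_⟩
  obtain ⟨k, hk⟩ := hS l hl
  have hCS := sq_sub_linear_le_eDist_sq_mul ζ l a b
  rw [hζ, hk] at hCS
  linarith [one_le_four_mul_sq_half_sub_intCast k]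

lemma latticeFamily_linear_eq_intCast {θ t : ℝ} (ht : 0 < t) (p q : ℤ) {l : ℝ × ℝ}
    (hl : l ∈ latticeFamily θ t) :
    ∃ k : ℤ, l.1 * (-(q / Real.sqrt t)) + l.2 * ((q * θ - p) * Real.sqrt t) = k := by
  obtain ⟨m, n, rfl⟩ := hl
  have hs : Real.sqrt t ≠ 0 := (Real.sqrt_pos.mpr ht).ne'
  refine ⟨q * n - m * p, ?_⟩
  push_cast
  field_simp
  ring

lemma sq_div_add_sq_mul_eq {q α : ℝ} (hα : α ≠ 0) :
    q ^ 2 / (q / |α|) + α ^ 2 * (q / |α|) = 2 * q * |α| := by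
  rcases eq_or_ne q 0 with rfl | hq
  · simp
  rw [← sq_abs α]
  field_simp
  ring

lemma one_le_eight_mul_sq_mul_mul_abs {θ r : ℝ}
    (hR : ∀ t ≥ (1 : ℝ), ∀ ζ : ℝ × ℝ, ∃ l ∈ latticeFamily θ t, eDist ζ l < r)
    {p q : ℤ} (hα : (q : ℝ) * θ - p ≠ 0) (hαq : |(q : ℝ) * θ - p| ≤ q) :
    1 ≤ 8 * r ^ 2 * (q * |(q : ℝ) * θ - p|) := by
  set α := (q : ℝ) * θ - p
  have hαpos : 0 < |α| := abs_pos.mpr hα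
  set t := (q : ℝ) / |α|
  have ht : 1 ≤ t := (one_le_div hαpos).mpr hαq
  have ht0 : 0 < t := by linarith
  have hw : (-(q / Real.sqrt t)) ^ 2 + (α * Real.sqrt t) ^ 2 = 2 * q * |α| := by
    rw [neg_sq, div_pow, mul_pow, Real.sq_sqrt ht0.le]
    exact sq_div_add_sq_mul_eq hα
  obtain ⟨ζ, hζ⟩ := exists_one_le_four_mul_eDist_sq_mul_of_intCast_linear
    (S := latticeFamily θ t) (by rw [hw]; exact mul_pos (by linarith) hαpos)
    (fun l hl => latticeFamily_linear_eq_intCast ht0 p q hl)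
  obtain ⟨l, hl, hlr⟩ := hR t ht ζ
  have hfar := hζ l hl
  rw [hw] at hfar
  have hl0 : 0 ≤ eDist ζ l := Real.sqrt_nonneg _
  have : eDist ζ l ^ 2 ≤ r ^ 2 := pow_le_pow_left₀ hl0 hlr.le 2
  nlinarith

theorem relatively_dense_implies_badly_approximable (θ : ℝ) (hθ : Irrational θ)
    (h : FamilyRelativelyDense θ) : BadlyApproximable θ := by
  obtain ⟨r, hr, hR⟩ := h
  refine ⟨hθ, min (1 / (8 * r ^ 2)) 1, by positivity, fun p q hq => ?_⟩
  have hq' : (1 : ℝ) ≤ q := by exact_mod_cast hq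
  have hα : (q : ℝ) * θ - p ≠ 0 :=
    sub_ne_zero.mpr ((hθ.intCast_mul (by omega : q ≠ 0)).ne_int p)
  rcases le_or_gt |(q : ℝ) * θ - p| q with hαq | hαq
  · have := one_le_eight_mul_sq_mul_mul_abs hR hα hαq
    refine (min_le_left _ _).trans ?_
    rw [div_le_iff₀ (by positivity)]
    linarith
  · exact (min_le_right _ _).trans (by nlinarith)
end

section
/- Let θ be an irrational real number, and for t ≥ 1 let Λ(t) = { ((mθ − n)·√t, m/√t) : m, n ∈ ℤ } ⊆ ℝ². If the family {Λ(t)}_{t≥1} is uniformly discrete, then θ is badly approximable. -/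
/-!
If `q |qθ - p|` is small, then at time `t = (qL)²` the lattice point of `Λ(t)` given by
`(m, n) = (q, p)` is `((qθ - p) q L, 1/L)`, a nonzero point within `q |qθ - p| L + 1/L` of the
origin. Uniform discreteness keeps it at distance at least `s` from the origin point `0 ∈ Λ(t)`,
so with `L ≥ 2/s` we get `q |qθ - p| ≥ s / (2L)`.
-/

lemma eDist_zero_le_abs_add_abs (v : ℝ × ℝ) : eDist 0 v ≤ |v.1| + |v.2| := by
  rw [eDist, Real.sqrt_le_iff]
  refine ⟨by positivity, ?_⟩
  simp only [Prod.fst_zero, Prod.snd_zero, zero_sub, neg_sq]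
  nlinarith [sq_abs v.1, sq_abs v.2, abs_nonneg v.1, abs_nonneg v.2]

lemma zero_mem_latticeFamily (θ t : ℝ) : (0 : ℝ × ℝ) ∈ latticeFamily θ t :=
  ⟨0, 0, by ext <;> simp⟩

lemma mem_latticeFamily_mul_sq (θ : ℝ) (p : ℤ) {q : ℤ} (hq : 0 < q) {L : ℝ} (hL : 0 < L) :
    ((q * θ - p) * (q * L), 1 / L) ∈ latticeFamily θ ((q * L) ^ 2) := by
  have hq' : (0 : ℝ) < q := Int.cast_pos.mpr hq
  refine ⟨q, p, ?_⟩
  rw [Real.sqrt_sq (by positivity)]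
  field_simp

lemma FamilyUniformlyDiscrete.exists_le_eDist_zero {θ : ℝ} (h : FamilyUniformlyDiscrete θ) :
    ∃ s > 0, ∀ t ≥ (1 : ℝ), ∀ v ∈ latticeFamily θ t, v ≠ 0 → s ≤ eDist 0 v := by
  obtain ⟨s, hs, hsub⟩ := h
  refine ⟨s, hs, fun t ht v hv hv0 => ?_⟩
  by_contra! hlt
  have hzero : eDist 0 (0 : ℝ × ℝ) < s := by simpa [eDist] using hs
  exact hv0 (hsub t ht 0 ⟨zero_mem_latticeFamily θ t, hzero⟩ ⟨hv, hlt⟩).symm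

lemma FamilyUniformlyDiscrete.exists_le_mul_abs_sub_mul_add_inv {θ : ℝ}
    (h : FamilyUniformlyDiscrete θ) :
    ∃ s > 0, ∀ L ≥ (1 : ℝ), ∀ p q : ℤ, 1 ≤ q → s ≤ q * |q * θ - p| * L + 1 / L := by
  obtain ⟨s, hs, hgap⟩ := h.exists_le_eDist_zero
  refine ⟨s, hs, fun L hL p q hq => ?_⟩
  have hL0 : 0 < L := one_pos.trans_le hL
  have hq1 : (1 : ℝ) ≤ q := by exact_mod_cast hq
  have ht : 1 ≤ ((q : ℝ) * L) ^ 2 := one_le_pow₀ (one_le_mul_of_one_le_of_one_le hq1 hL)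
  have hne : (((q : ℝ) * θ - p) * (q * L), 1 / L) ≠ 0 := fun h0 => by
    simpa [hL0.ne'] using congrArg Prod.snd h0
  calc s ≤ eDist 0 (((q : ℝ) * θ - p) * (q * L), 1 / L) :=
        hgap _ ht _ (mem_latticeFamily_mul_sq θ p hq hL0) hne
    _ ≤ |((q : ℝ) * θ - p) * (q * L)| + |1 / L| := eDist_zero_le_abs_add_abs _
    _ = q * |q * θ - p| * L + 1 / L := by
        rw [abs_mul, abs_of_pos (by positivity : (0 : ℝ) < q * L),
          abs_of_pos (one_div_pos.mpr hL0)]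
        ring

theorem uniformly_discrete_implies_badly_approximable (θ : ℝ) (hθ : Irrational θ)
    (h : FamilyUniformlyDiscrete θ) : BadlyApproximable θ := by
  obtain ⟨s, hs, hbound⟩ := h.exists_le_mul_abs_sub_mul_add_inv
  set L := max 1 (2 / s)
  have hL : 1 ≤ L := le_max_left _ _
  have hL0 : 0 < L := one_pos.trans_le hL
  have hinv : 1 / L ≤ s / 2 := by
    rw [div_le_iff₀ hL0]
    have := (div_le_iff₀ hs).mp (le_max_right 1 (2 / s))
    linarith
  refine ⟨hθ, s / (2 * L), by positivity, fun p q hq => ?_⟩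
  have := hbound L hL p q hq
  rw [div_le_iff₀ (by positivity)]
  linarith
end

section
/- Let θ be a badly approximable real number, and for t ≥ 1 let Λ(t) = { ((mθ − n)·√t, m/√t) : m, n ∈ ℤ } ⊆ ℝ². Then the family {Λ(t)}_{t≥1} is uniformly discrete. -/
/-!
Differences of points of `Λ(t)` lie in `Λ(t)`, so it suffices to keep the nonzero vectors
`v = ((mθ − n)√t, m/√t)` away from `0` uniformly in `t`. If `m = 0` then `|v.1| = |n|√t ≥ 1`;
otherwise `|v.1| · |v.2| = |m| · |mθ − n| ≥ c` by bad approximability. Either way `v` has a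
coordinate of size at least `min 1 √c`, and balls of half that radius contain at most one point.
-/

lemma abs_fst_sub_le_eDist (a b : ℝ × ℝ) : |a.1 - b.1| ≤ eDist a b := by
  rw [eDist, ← Real.sqrt_sq_eq_abs]
  exact Real.sqrt_le_sqrt (by nlinarith [sq_nonneg (a.2 - b.2)])

lemma abs_snd_sub_le_eDist (a b : ℝ × ℝ) : |a.2 - b.2| ≤ eDist a b := by
  rw [eDist, ← Real.sqrt_sq_eq_abs]
  exact Real.sqrt_le_sqrt (by nlinarith [sq_nonneg (a.1 - b.1)])

lemma subsingleton_eDist_lt_of_separated {S : Set (ℝ × ℝ)} {δ : ℝ}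
    (hS : ∀ a ∈ S, ∀ b ∈ S, a ≠ b → δ ≤ |a.1 - b.1| ∨ δ ≤ |a.2 - b.2|) (ζ : ℝ × ℝ) :
    {l ∈ S | eDist ζ l < δ / 2}.Subsingleton := by
  rintro a ⟨ha, hζa⟩ b ⟨hb, hζb⟩
  by_contra hab
  rcases hS a ha b hb hab with h | h
  · have := abs_sub_le a.1 ζ.1 b.1
    rw [abs_sub_comm a.1 ζ.1] at this
    linarith [abs_fst_sub_le_eDist ζ a, abs_fst_sub_le_eDist ζ b]
  · have := abs_sub_le a.2 ζ.2 b.2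
    rw [abs_sub_comm a.2 ζ.2] at this
    linarith [abs_snd_sub_le_eDist ζ a, abs_snd_sub_le_eDist ζ b]

lemma sub_mem_latticeFamily {θ t : ℝ} {a b : ℝ × ℝ} (ha : a ∈ latticeFamily θ t)
    (hb : b ∈ latticeFamily θ t) : a - b ∈ latticeFamily θ t := by
  obtain ⟨m, n, rfl⟩ := ha
  obtain ⟨m', n', rfl⟩ := hb
  refine ⟨m - m', n - n', ?_⟩
  rw [Prod.mk_sub_mk, Int.cast_sub, Int.cast_sub]
  congr 1 <;> ring

lemma le_abs_mul_abs_sub_of_ne_zero {θ c : ℝ}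
    (hc : ∀ p q : ℤ, 1 ≤ q → c ≤ (q : ℝ) * |(q : ℝ) * θ - (p : ℝ)|) {p q : ℤ} (hq : q ≠ 0) :
    c ≤ |(q : ℝ)| * |(q : ℝ) * θ - (p : ℝ)| := by
  rcases hq.lt_or_gt with hneg | hpos
  · calc c ≤ ((-q : ℤ) : ℝ) * |((-q : ℤ) : ℝ) * θ - ((-p : ℤ) : ℝ)| := hc (-p) (-q) (by omega)
      _ = |(q : ℝ)| * |(q : ℝ) * θ - (p : ℝ)| := by
        rw [abs_of_neg (show (q : ℝ) < 0 by exact_mod_cast hneg), ← abs_neg ((q : ℝ) * θ - p)]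
        push_cast
        ring_nf
  · rw [abs_of_pos (by exact_mod_cast hpos)]
    exact hc p q hpos

lemma one_le_abs_fst_or_le_abs_mul_of_mem_latticeFamily {θ t c : ℝ} (ht : 1 ≤ t)
    (hc : ∀ p q : ℤ, 1 ≤ q → c ≤ (q : ℝ) * |(q : ℝ) * θ - (p : ℝ)|) {v : ℝ × ℝ}
    (hv : v ∈ latticeFamily θ t) (hv0 : v ≠ 0) : 1 ≤ |v.1| ∨ c ≤ |v.1| * |v.2| := by
  obtain ⟨m, n, rfl⟩ := hv
  have hsqrt : 1 ≤ √t := Real.one_le_sqrt.mpr ht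
  have hsqrt0 : 0 < √t := by linarith
  by_cases hm : m = 0
  · left
    have hn : n ≠ 0 := by rintro rfl; simp [hm] at hv0
    have : (1 : ℝ) ≤ |(n : ℝ)| := by exact_mod_cast Int.one_le_abs hn
    simp only [hm, Int.cast_zero, zero_mul, zero_sub, neg_mul, abs_neg, abs_mul,
      abs_of_pos hsqrt0]
    nlinarith
  · right
    calc c ≤ |(m : ℝ)| * |(m : ℝ) * θ - n| := le_abs_mul_abs_sub_of_ne_zero hc hm
      _ = |((m : ℝ) * θ - n) * √t| * |(m : ℝ) / √t| := by
        rw [abs_mul, abs_div, abs_of_pos hsqrt0]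
        field_simp

lemma min_one_sqrt_le_abs_or_abs {x y c : ℝ} (hc : 0 ≤ c)
    (h : 1 ≤ |x| ∨ c ≤ |x| * |y|) : min 1 √c ≤ |x| ∨ min 1 √c ≤ |y| := by
  by_contra! hsmall
  obtain ⟨hx, hy⟩ := hsmall
  rcases h with hx1 | hxy
  · linarith [min_le_left 1 √c]
  · have hx' : |x| < √c := hx.trans_le (min_le_right 1 √c)
    have hy' : |y| < √c := hy.trans_le (min_le_right 1 √c)
    have := mul_lt_mul'' hx' hy' (abs_nonneg _) (abs_nonneg _)
    rw [Real.mul_self_sqrt hc] at this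
    linarith

theorem badly_approximable_implies_uniformly_discrete (θ : ℝ)
    (h : BadlyApproximable θ) : FamilyUniformlyDiscrete θ := by
  obtain ⟨-, c, hc, hbad⟩ := h
  refine ⟨min 1 √c / 2, by positivity, fun t ht ζ ↦
    subsingleton_eDist_lt_of_separated (fun a ha b hb hab ↦ ?_) ζ⟩
  have hsep := one_le_abs_fst_or_le_abs_mul_of_mem_latticeFamily ht hbad
    (sub_mem_latticeFamily ha hb) (sub_ne_zero.mpr hab)
  exact min_one_sqrt_le_abs_or_abs hc.le hsep
end

section
/- Let θ be a badly approximable real number, and for t ≥ 1 let Λ(t) = { ((mθ − n)·√t, m/√t) : m, n ∈ ℤ } ⊆ ℝ². Then the family {Λ(t)}_{t≥1} is relatively dense. -/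
/-!
The key fact is a uniform inhomogeneous Dirichlet theorem: if `q ‖qθ‖ ≥ c` for all `q ≥ 1`, then
every `x` is `ε`-close to some `mθ - n` with `|m| ≤ C/ε`, `C = 4/c + 1`. It is proved scale by
scale: an approximation at scale `2ε` leaves an error `y` with `|y| ≤ 2ε`; Dirichlet gives
`σ = qθ - p` with `q ≤ 1/ε` and `|σ| ≤ ε`, bad approximability gives `|σ| ≥ cε`, so rounding
`y` to a multiple of `σ` costs at most `(2/c + 1/2)/ε` in `|m|` and leaves an error `≤ ε/2`.

For `ζ = (x, y)` and `s = √t`, approximating `x/s - aθ` with `a = round (y s)` at scale `1/(2s)`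
yields a lattice point `(((a + m)θ - n)s, (a + m)/s)` at distance `≤ 1 + 2C` from `ζ`.
-/

open Real

theorem exists_int_int_abs_mul_sub_le_of_le_one (θ : ℝ) {ε : ℝ} (hε₀ : 0 < ε) (hε₁ : ε ≤ 1) :
    ∃ p q : ℤ, 0 < q ∧ (q : ℝ) ≤ ε⁻¹ ∧ |q * θ - p| ≤ ε := by
  have hN : 0 < ⌊ε⁻¹⌋₊ := Nat.floor_pos.mpr (one_le_inv₀ hε₀ |>.mpr hε₁)
  obtain ⟨p, q, hq₀, hqN, hpq⟩ := exists_int_int_abs_mul_sub_le θ hN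
  refine ⟨p, q, hq₀, (Int.cast_le.mpr hqN).trans (Nat.floor_le (by positivity)), ?_⟩
  refine hpq.trans ?_
  rw [div_le_iff₀ (by positivity), ← div_le_iff₀' hε₀, one_div]
  exact (Nat.lt_floor_add_one _).le

theorem exists_int_abs_add_mul_le_half (y : ℝ) {σ : ℝ} (hσ : σ ≠ 0) :
    ∃ j : ℤ, |(j : ℝ)| ≤ |y| / |σ| + 1 / 2 ∧ |y + j * σ| ≤ |σ| / 2 := by
  have hround := abs_sub_round (-y / σ)
  refine ⟨round (-y / σ), ?_, ?_⟩
  · have := abs_sub_abs_le_abs_sub (round (-y / σ) : ℝ) (-y / σ)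
    rw [abs_div, abs_neg] at this
    rw [abs_sub_comm] at hround
    linarith
  · calc |y + round (-y / σ) * σ| = |σ| * |-y / σ - round (-y / σ)| := by
          rw [← abs_mul, ← abs_neg]; congr 1; field_simp; ring
      _ ≤ |σ| * (1 / 2) := by gcongr
      _ = |σ| / 2 := by ring

def InhomApprox (θ B ε : ℝ) : Prop :=
  ∀ x : ℝ, ∃ m n : ℤ, |(m : ℝ)| ≤ B ∧ |m * θ - n - x| ≤ ε

namespace InhomApprox

variable {θ B ε : ℝ}

theorem of_half_le (hB : 0 ≤ B) (hε : 1 / 2 ≤ ε) : InhomApprox θ B ε := fun x ↦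
  ⟨0, -round x, by simpa using hB, by
    simpa [abs_sub_comm] using (abs_sub_round x).trans hε⟩

theorem halve {c : ℝ} (hc : 0 < c) (hba : ∀ p q : ℤ, 1 ≤ q → c ≤ q * |q * θ - p|)
    (hε₀ : 0 < ε) (hε₁ : ε ≤ 1) (h : InhomApprox θ B (2 * ε)) :
    InhomApprox θ (B + (2 / c + 1 / 2) / ε) ε := fun x ↦ by
  obtain ⟨m, n, hm, hy⟩ := h x
  obtain ⟨p, q, hq₀, hqε, hσε⟩ := exists_int_int_abs_mul_sub_le_of_le_one θ hε₀ hε₁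
  set σ := q * θ - p
  have hq : (0 : ℝ) < q := Int.cast_pos.mpr hq₀
  have hσ : c * ε ≤ |σ| := by
    have hcσ : c ≤ q * |σ| := hba p q hq₀
    have hqε' : q * ε ≤ 1 := by
      simpa [hε₀.ne'] using mul_le_mul_of_nonneg_right hqε hε₀.le
    nlinarith [mul_le_mul_of_nonneg_right hcσ hε₀.le,
      mul_le_mul_of_nonneg_left hqε' (abs_nonneg σ)]
  have hσ₀ : 0 < |σ| := lt_of_lt_of_le (by positivity) hσ
  obtain ⟨j, hj, hjσ⟩ := exists_int_abs_add_mul_le_half (m * θ - n - x) (abs_pos.mp hσ₀)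
  have hj' : |(j : ℝ)| ≤ 2 / c + 1 / 2 := by
    refine hj.trans (add_le_add_left ?_ _)
    rw [div_le_div_iff₀ hσ₀ hc]
    nlinarith
  refine ⟨m + j * q, n + j * p, ?_, ?_⟩
  · calc |((m + j * q : ℤ) : ℝ)| ≤ |(m : ℝ)| + |(j : ℝ)| * q := by
          push_cast; rw [← abs_of_pos hq, ← abs_mul, abs_of_pos hq]; exact abs_add_le _ _
      _ ≤ B + (2 / c + 1 / 2) * ε⁻¹ := by gcongr
      _ = B + (2 / c + 1 / 2) / ε := by ring
  · calc |((m + j * q : ℤ) : ℝ) * θ - ((n + j * p : ℤ) : ℝ) - x| = |m * θ - n - x + j * σ| := by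
          push_cast; congr 1; simp only [σ]; ring
      _ ≤ |σ| / 2 := hjσ
      _ ≤ ε := by linarith

end InhomApprox

theorem inhomApprox_of_badlyApproximable {θ c : ℝ} (hc : 0 < c)
    (hba : ∀ p q : ℤ, 1 ≤ q → c ≤ q * |q * θ - p|) {ε : ℝ} (hε : 0 < ε) :
    InhomApprox θ ((4 / c + 1) / ε) ε := by
  obtain ⟨k, hk⟩ := pow_unbounded_of_one_lt (1 / (2 * ε)) one_lt_two
  rw [div_lt_iff₀ (by positivity)] at hk
  induction k generalizing ε with
  | zero => exact .of_half_le (by positivity) (by linarith)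
  | succ k ih =>
    rcases le_or_gt (1 / 2) ε with hε₂ | hε₂
    · exact .of_half_le (by positivity) hε₂
    have h2ε := ih (by positivity : 0 < 2 * ε) (by rw [pow_succ] at hk; linarith)
    convert h2ε.halve hc hba hε (by linarith) using 1
    field_simp
    ring

theorem exists_mem_latticeFamily_abs_sub_le {θ t B : ℝ} (ht : 0 < t)
    (h : InhomApprox θ B (1 / (2 * √t))) (ζ : ℝ × ℝ) :
    ∃ l ∈ latticeFamily θ t, |ζ.1 - l.1| ≤ 1 / 2 ∧ |ζ.2 - l.2| ≤ (1 / 2 + B) / √t := by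
  obtain ⟨x, y⟩ := ζ
  have hs : 0 < √t := sqrt_pos.mpr ht
  set a := round (y * √t)
  obtain ⟨m, n, hm, hx⟩ := h (x / √t - a * θ)
  refine ⟨_, ⟨a + m, n, rfl⟩, ?_, ?_⟩
  · calc |x - (((a + m : ℤ) : ℝ) * θ - n) * √t| = |m * θ - n - (x / √t - a * θ)| * √t := by
          rw [← abs_of_pos hs, ← abs_mul, abs_of_pos hs, ← abs_neg]; congr 1; push_cast
          field_simp; ring
      _ ≤ 1 / (2 * √t) * √t := by gcongr
      _ = 1 / 2 := by field_simp
  · calc |y - ((a + m : ℤ) : ℝ) / √t| = |(y * √t - a) - m| / √t := by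
          rw [← abs_of_pos hs, ← abs_div, abs_of_pos hs]; congr 1; push_cast; field_simp; ring
      _ ≤ (|y * √t - a| + |(m : ℝ)|) / √t := by gcongr; exact abs_sub _ _
      _ ≤ (1 / 2 + B) / √t := by gcongr; exact abs_sub_round _

theorem eDist_le_abs_add_abs (a b : ℝ × ℝ) : eDist a b ≤ |a.1 - b.1| + |a.2 - b.2| := by
  rw [eDist, sqrt_le_left (by positivity), add_sq, sq_abs, sq_abs]
  nlinarith [abs_nonneg (a.1 - b.1), abs_nonneg (a.2 - b.2)]

theorem badly_approximable_implies_relatively_dense (θ : ℝ)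
    (h : BadlyApproximable θ) : FamilyRelativelyDense θ := by
  obtain ⟨-, c, hc, hba⟩ := h
  set C := 4 / c + 1
  refine ⟨2 * C + 2, by positivity, fun t ht ζ ↦ ?_⟩
  have hs : 1 ≤ √t := one_le_sqrt.mpr ht
  obtain ⟨l, hl, h₁, h₂⟩ := exists_mem_latticeFamily_abs_sub_le (by linarith)
    (inhomApprox_of_badlyApproximable hc hba (by positivity : 0 < 1 / (2 * √t))) ζ
  refine ⟨l, hl, (eDist_le_abs_add_abs ζ l).trans_lt ?_⟩
  have h₂' : |ζ.2 - l.2| ≤ 1 / 2 + 2 * C := by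
    refine h₂.trans ?_
    have hC : (1 / 2 + C / (1 / (2 * √t))) / √t = 1 / (2 * √t) + 2 * C := by
      field_simp
    have ht' : 1 / (2 * √t) ≤ 1 / 2 := by
      rw [div_le_div_iff₀ (by positivity) two_pos]; linarith
    linarith
  linarith
end

section
/- Let α > 0 and β = 1 − 1/(2α). If θ is a badly approximable real number, then the Archimedean spiral lattice Γ_{α,θ} is asymptotically β-relatively dense. -/
/-! Write `‖z‖ = S ^ (2α)`. Dirichlet's theorem gives a rational `p / q` with `q ≤ M` and
`|θ - p / q| ≤ 1 / (q (M + 1))`; badly approximable `θ` forces `q ≳ M`, so any `M` consecutive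
multiples of `θ` are `O(1 / M)`-dense modulo `1`. Taking the `M ≈ S` integers just below `S²`,
some `n` has `2π n θ` within `O(1 / S)` of `arg z` modulo `2π`. The radial error
`S ^ (2α) - n ^ α ≈ α S ^ (2α - 2) (S² - n)` and the angular error `n ^ α · O(1 / S)` are then both
`O(S ^ (2α - 1)) = O(‖z‖ ^ β)`. -/

open Complex Real

/-- Every `M` consecutive multiples of `θ` form a `C / M`-net of `ℝ / ℤ`. -/
def HasDenseWindows (θ C : ℝ) : Prop :=
  ∀ a M : ℕ, 0 < M → ∀ x : ℝ, ∃ n, a ≤ n ∧ n < a + M ∧ ∃ k : ℤ, |n * θ - x - k| ≤ C / M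

theorem Rat.exists_lt_den_abs_mul_sub_sub_int_le (a : ℚ) (x : ℝ) :
    ∃ j < a.den, ∃ k : ℤ, |j * (a : ℝ) - x - k| ≤ 1 / (2 * a.den) := by
  obtain ⟨u, v, huv⟩ : IsCoprime a.num a.den := Int.isCoprime_iff_gcd_eq_one.mpr a.reduced
  have hq : (0 : ℤ) < a.den := mod_cast a.pos
  set m : ℤ := round (a.den * x)
  obtain ⟨j, hj⟩ := Int.eq_ofNat_of_zero_le (Int.emod_nonneg (m * u) hq.ne')
  have hjq : (j : ℤ) < a.den := hj ▸ Int.emod_lt_of_pos _ hq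
  set k : ℤ := -(m * v) - m * u / a.den * a.num
  -- `u` inverts `a.num` modulo `a.den`, so `j * a ≡ m / a.den` modulo `1`.
  have hmul : (j : ℤ) * a.num = m + a.den * k := by
    rw [← hj]; linear_combination a.num * Int.emod_add_mul_ediv (m * u) a.den + m * huv
  refine ⟨j, by omega, k, ?_⟩
  have hden : (0 : ℝ) < a.den := mod_cast a.pos
  have hmulR : (j : ℝ) * a.num = m + a.den * k := mod_cast hmul
  have hja : (j : ℝ) * a - k = m / a.den := by
    rw [Rat.cast_def, eq_div_iff hden.ne']
    field_simp
    linear_combination hmulR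
  rw [sub_right_comm, hja, abs_sub_comm, le_div_iff₀ (by positivity)]
  calc |x - m / a.den| * (2 * a.den) = 2 * |a.den * x - m| := by
        rw [show (a.den : ℝ) * x - m = a.den * (x - m / a.den) by field_simp, abs_mul,
          abs_of_pos hden]
        ring
    _ ≤ 1 := by linarith [abs_sub_round ((a.den : ℝ) * x)]

theorem Rat.exists_lt_den_abs_mul_sub_sub_int_le_add (a : ℚ) (θ x : ℝ) :
    ∃ j < a.den, ∃ k : ℤ, |j * θ - x - k| ≤ 1 / (2 * a.den) + a.den * |θ - a| := by
  obtain ⟨j, hj, k, hk⟩ := a.exists_lt_den_abs_mul_sub_sub_int_le x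
  refine ⟨j, hj, k, ?_⟩
  have hjθ : |j * θ - j * (a : ℝ)| ≤ a.den * |θ - a| := by
    rw [← mul_sub, abs_mul, Nat.abs_cast]
    gcongr
  calc |j * θ - x - k| = |(j * (a : ℝ) - x - k) + (j * θ - j * a)| := by ring_nf
    _ ≤ _ := (abs_add_le _ _).trans (add_le_add hk hjθ)

theorem BadlyApproximable.exists_hasDenseWindows {θ : ℝ} (h : BadlyApproximable θ) :
    ∃ C > 0, HasDenseWindows θ C := by
  obtain ⟨-, c, hc, hbad⟩ := h
  refine ⟨1 / (2 * c) + 1, by positivity, fun a M hM x => ?_⟩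
  obtain ⟨q, hqθ, hqM⟩ := Real.exists_rat_abs_sub_le_and_den_le θ hM
  have hden : (0 : ℝ) < q.den := mod_cast q.pos
  have hM' : (0 : ℝ) < M := mod_cast hM
  have hclose : q.den * |θ - q| ≤ 1 / M := by
    calc q.den * |θ - q| ≤ q.den * (1 / ((M + 1) * q.den)) := by gcongr
      _ = 1 / (M + 1) := by field_simp
      _ ≤ 1 / M := by gcongr; linarith
  -- Dirichlet's approximation `q` has a large denominator because `θ` is badly approximable.
  have hlarge : c * M ≤ q.den := by
    have hfar : c ≤ q.den * (q.den * |θ - q|) := by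
      have hq : (q.den : ℝ) * θ - q.num = q.den * (θ - q) := by
        rw [Rat.cast_def]; field_simp
      simpa [hq, abs_mul] using hbad q.num q.den (mod_cast q.pos)
    calc c * M ≤ q.den * (q.den * |θ - q|) * M := by gcongr
      _ ≤ q.den * (1 / M) * M := by gcongr
      _ = q.den := by field_simp
  obtain ⟨j, hj, k, hk⟩ := q.exists_lt_den_abs_mul_sub_sub_int_le_add θ (x - a * θ)
  refine ⟨a + j, by omega, by omega, k, ?_⟩
  calc |((a + j : ℕ) : ℝ) * θ - x - k| = |j * θ - (x - a * θ) - k| := by push_cast; ring_nf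
    _ ≤ 1 / (2 * q.den) + q.den * |θ - q| := hk
    _ ≤ 1 / (2 * (c * M)) + 1 / M := by gcongr
    _ = (1 / (2 * c) + 1) / M := by field_simp

theorem Real.one_sub_mul_one_sub_le_rpow {s α : ℝ} (hs₀ : 0 ≤ s) (hs₁ : s ≤ 1) (hα : 0 ≤ α) :
    1 - max α 1 * (1 - s) ≤ s ^ α := by
  rcases le_total α 1 with hα₁ | hα₁
  · have : s ^ (1 : ℝ) ≤ s ^ α := Real.rpow_le_rpow_of_exponent_ge' hs₀ hs₁ hα hα₁
    rw [Real.rpow_one] at this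
    rw [max_eq_right hα₁]
    linarith
  · have := one_add_mul_self_le_rpow_one_add (by linarith : -1 ≤ s - 1) hα₁
    rw [add_sub_cancel] at this
    rw [max_eq_left hα₁]
    linarith

theorem Real.rpow_sub_rpow_le_mul_sub {t T α : ℝ} (ht : 0 ≤ t) (htT : t ≤ T) (hα : 0 ≤ α) :
    T ^ α - t ^ α ≤ max α 1 * T ^ (α - 1) * (T - t) := by
  rcases (ht.trans htT).eq_or_lt with rfl | hT
  · simp [le_antisymm htT ht]
  have key := Real.one_sub_mul_one_sub_le_rpow (div_nonneg ht hT.le)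
    ((div_le_one hT).mpr htT) hα
  rw [Real.div_rpow ht hT.le, le_div_iff₀ (by positivity)] at key
  have hTα : T ^ α = T ^ (α - 1) * T := by rw [← Real.rpow_add_one hT.ne', sub_add_cancel]
  calc T ^ α - t ^ α ≤ max α 1 * (1 - t / T) * T ^ α := by linarith
    _ = max α 1 * T ^ (α - 1) * (T - t) := by rw [hTα]; field_simp

theorem HasDenseWindows.exists_nat_near_sq {θ C S : ℝ} (h : HasDenseWindows θ C) (hC : 0 ≤ C)
    (hS : 2 ≤ S) (x : ℝ) :
    ∃ n : ℕ, S ^ 2 - S - 1 < n ∧ n ≤ S ^ 2 ∧ ∃ k : ℤ, |n * θ - x - k| ≤ 2 * C / S := by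
  have hM : 0 < ⌊S⌋₊ := Nat.floor_pos.mpr (by linarith)
  obtain ⟨n, han, hnM, k, hk⟩ := h ⌊S ^ 2 - S⌋₊ ⌊S⌋₊ hM x
  have hlo : S ^ 2 - S < ⌊S ^ 2 - S⌋₊ + 1 := Nat.lt_floor_add_one _
  have hfa : (⌊S ^ 2 - S⌋₊ : ℝ) ≤ S ^ 2 - S := Nat.floor_le (by nlinarith)
  have hfM : (⌊S⌋₊ : ℝ) ≤ S := Nat.floor_le (by linarith)
  have hMS : S / 2 ≤ ⌊S⌋₊ := by linarith [Nat.lt_floor_add_one S]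
  have han' : (⌊S ^ 2 - S⌋₊ : ℝ) ≤ n := mod_cast han
  have hnM' : (n : ℝ) + 1 ≤ ⌊S ^ 2 - S⌋₊ + ⌊S⌋₊ := mod_cast hnM
  refine ⟨n, by linarith, by linarith, k, hk.trans ?_⟩
  calc C / ⌊S⌋₊ ≤ C / (S / 2) := by gcongr
    _ = 2 * C / S := by field_simp

theorem Complex.norm_ofReal_mul_exp_sub_ofReal_mul_exp_le (r ρ φ ψ : ℝ) (k : ℤ) :
    ‖(r : ℂ) * exp (φ * I) - ρ * exp (ψ * I)‖ ≤ |r - ρ| + |ρ| * |ψ - φ - 2 * π * k| := by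
  set d := ψ - φ - 2 * π * k
  have hψ : exp (ψ * I) = exp (φ * I) * exp (I * d) := by
    rw [← exp_add, show (ψ : ℂ) * I = φ * I + I * d + k * (2 * π * I) by
      simp only [d]; push_cast; ring,
      exp_add, exp_int_mul_two_pi_mul_I, mul_one]
  have hdecomp : (r : ℂ) * exp (φ * I) - ρ * exp (ψ * I)
      = ((r - ρ : ℝ) : ℂ) * exp (φ * I) - ρ * exp (φ * I) * (exp (I * d) - 1) := by
    rw [hψ]; push_cast; ring
  rw [hdecomp]
  refine (norm_sub_le _ _).trans (add_le_add ?_ ?_)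
  · rw [norm_mul, norm_exp_ofReal_mul_I, mul_one, norm_real, Real.norm_eq_abs]
  · rw [norm_mul, norm_mul, norm_exp_ofReal_mul_I, mul_one, norm_real, Real.norm_eq_abs]
    gcongr
    simpa using Real.norm_exp_I_mul_ofReal_sub_one_le (x := d)

theorem Real.rpow_two_mul_sub_rpow_le_of_near_sq {α S t : ℝ} (hα : 0 ≤ α) (hS : 1 ≤ S) (ht : 0 ≤ t)
    (hlo : S ^ 2 - S - 1 < t) (hhi : t ≤ S ^ 2) :
    S ^ (2 * α) - t ^ α ≤ 2 * max α 1 * S ^ (2 * α - 1) := by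
  have hS₀ : 0 < S := by linarith
  have hsq : S ^ (2 * α) = (S ^ 2) ^ α := mod_cast Real.rpow_natCast_mul hS₀.le 2 α
  have hsq' : (S ^ 2) ^ (α - 1) * S = S ^ (2 * α - 1) := by
    rw [← Real.rpow_two, ← Real.rpow_mul hS₀.le, ← Real.rpow_add_one hS₀.ne']
    ring_nf
  calc S ^ (2 * α) - t ^ α ≤ max α 1 * (S ^ 2) ^ (α - 1) * (S ^ 2 - t) := by
        rw [hsq]; exact Real.rpow_sub_rpow_le_mul_sub ht hhi hα
    _ ≤ max α 1 * (S ^ 2) ^ (α - 1) * (2 * S) := by gcongr; linarith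
    _ = 2 * max α 1 * S ^ (2 * α - 1) := by rw [← hsq']; ring

theorem HasDenseWindows.exists_norm_sub_spiral_le {α θ C S : ℝ} (h : HasDenseWindows θ C)
    (hα : 0 ≤ α) (hC : 0 ≤ C) (hS : 2 ≤ S) (φ : ℝ) :
    ∃ n : ℕ, 1 ≤ n ∧ ‖((S ^ (2 * α) : ℝ) : ℂ) * exp (φ * I) -
      ((n : ℝ) ^ α : ℝ) * exp ((2 * π * n * θ : ℝ) * I)‖
        ≤ (2 * max α 1 + 4 * π * C) * S ^ (2 * α - 1) := by
  obtain ⟨n, hlo, hhi, k, hk⟩ := h.exists_nat_near_sq hC hS (φ / (2 * π))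
  have hS₀ : 0 < S := by linarith
  have hn : (0 : ℝ) ≤ n := n.cast_nonneg
  have hnα : (n : ℝ) ^ α ≤ S ^ (2 * α) := by
    rw [show S ^ (2 * α) = (S ^ 2) ^ α from mod_cast Real.rpow_natCast_mul hS₀.le 2 α]
    exact Real.rpow_le_rpow hn hhi hα
  have hangle : |2 * π * n * θ - φ - 2 * π * k| = 2 * π * |n * θ - φ / (2 * π) - k| := by
    rw [← abs_of_pos two_pi_pos, ← abs_mul, abs_of_pos two_pi_pos]
    congr 1; field_simp
  refine ⟨n, by exact_mod_cast (by nlinarith : (1 : ℝ) ≤ n), ?_⟩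
  refine (Complex.norm_ofReal_mul_exp_sub_ofReal_mul_exp_le _ _ _ _ k).trans ?_
  rw [abs_of_nonneg (sub_nonneg.mpr hnα), abs_of_nonneg (by positivity), hangle]
  have hradial := Real.rpow_two_mul_sub_rpow_le_of_near_sq hα (by linarith) hn hlo hhi
  have hangular : (n : ℝ) ^ α * (2 * π * |n * θ - φ / (2 * π) - k|)
      ≤ 4 * π * C * S ^ (2 * α - 1) :=
    calc (n : ℝ) ^ α * (2 * π * |n * θ - φ / (2 * π) - k|)
        ≤ S ^ (2 * α) * (2 * π * (2 * C / S)) := by gcongr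
      _ = 4 * π * C * S ^ (2 * α - 1) := by
        rw [Real.rpow_sub hS₀, Real.rpow_one]; field_simp; ring
  linarith

theorem badly_approx_implies_spiral_relatively_dense (α θ β : ℝ) (hα : 0 < α)
    (hβ : β = 1 - 1 / (2 * α)) (h : BadlyApproximable θ) :
    AsympRelativelyDense β (spiralLattice α θ) := by
  obtain ⟨C, hC, hdense⟩ := h.exists_hasDenseWindows
  refine ⟨2 * max α 1 + 4 * π * C, by positivity, fun r₁ hr₁ => ⟨2 ^ (2 * α), by positivity,
    fun z hz => ?_⟩⟩
  set S := ‖z‖ ^ (2 * α)⁻¹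
  have hzS : ‖z‖ = S ^ (2 * α) := by
    rw [← Real.rpow_mul (norm_nonneg z), inv_mul_cancel₀ (by positivity), Real.rpow_one]
  have hS : 2 ≤ S := by
    rwa [hzS, Real.rpow_le_rpow_iff (by norm_num) (by positivity) (by positivity)] at hz
  obtain ⟨n, hn, hnear⟩ := hdense.exists_norm_sub_spiral_le hα.le hC.le hS (arg z)
  refine ⟨_, ⟨n, rfl⟩, ?_, ?_⟩
  · rw [norm_mul, norm_exp_ofReal_mul_I, mul_one, norm_real, Real.norm_eq_abs,
      abs_of_nonneg (by positivity)]
    exact Real.one_le_rpow (mod_cast hn) hα.le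
  calc ‖z - _‖ = ‖((S ^ (2 * α) : ℝ) : ℂ) * exp (arg z * I) - _‖ := by
        rw [← hzS, norm_mul_exp_arg_mul_I]
    _ ≤ (2 * max α 1 + 4 * π * C) * S ^ (2 * α - 1) := hnear
    _ < r₁ * S ^ (2 * α - 1) := by gcongr
    _ = r₁ * ‖z‖ ^ β := by
        rw [hzS, ← Real.rpow_mul (by positivity), hβ]
        congr 2
        field_simp
end
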